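/- arXiv:math/0309210 — 16 statements merged into one kernel-verified Lean document; each statement's English description precedes it below -/
import Mathlib

section
/- Let k be an algebraically closed field of characteristic p > 0 and let n be a natural number. Let u and g be polynomials in k[X₁,…,Xₙ] such that for every index i the degree of g in the variable Xᵢ equals (p−1) times the degree of u in Xᵢ. Then there exists a polynomial h ∈ k[X₁,…,Xₙ] whose degree in each variable Xᵢ is at most the degree of u in Xᵢ, such that the p-th power part of h^p + g·h equals u^p; that is, for every exponent vector m : Fin n →₀ ℕ with p dividing every component of m, the coefficient of the monomial X^m in h^p + g·h equals its coefficient in u^p. -/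
open MvPolynomial

set_option linter.unusedSectionVars false

section Core

variable {k : Type*} [Field k] [IsAlgClosed k] (p : ℕ) [Fact p.Prime] [CharP k p]

/-- A choice of `p`-th root. -/
noncomputable def prt (a : k) : k :=
  Classical.choose (IsAlgClosed.exists_pow_nat_eq a (n := p) (Nat.Prime.pos Fact.out))

lemma prt_spec (a : k) : (prt p a) ^ p = a :=
  Classical.choose_spec (IsAlgClosed.exists_pow_nat_eq a (n := p) (Nat.Prime.pos Fact.out))

/-- Key surjectivity lemma: `x ↦ x^{(p)} + Bx` is surjective on `k^ι`. -/
lemma key_surj {ι : Type*} [Fintype ι] [DecidableEq ι] [Nonempty ι]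
    (B : Matrix ι ι k) (y : ι → k) :
    ∃ x : ι → k, ∀ i, x i ^ p + B.mulVec x i = y i := by
  classical
  have hp2 : 2 ≤ p := (Fact.out : p.Prime).two_le
  set φ : k →+* k := frobenius k p with hφdef
  have hφ : ∀ a : k, φ a = a ^ p := fun a => frobenius_def p a
  set T : Matrix ι ι k → Matrix ι ι k := fun M => (B * M).map (prt p) with hT
  have hTφ : ∀ M, (T M).map φ = B * M := by
    intro M; ext i j
    simp only [hT, Matrix.map_apply, hφ]
    rw [prt_spec]
  set W : ℕ → Matrix ι ι k := fun s => B * (T^[s] 1) with hW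
  set u : ℕ → Matrix ι ι k := fun s => match s with
    | 0 => 1
    | t+1 => W t with hu
  have hu0 : u 0 = 1 := rfl
  have husucc : ∀ s, u (s+1) = W s := fun s => rfl
  have hdep : ¬ LinearIndependent k u :=
    Module.Finite.not_linearIndependent_of_infinite u
  rw [linearIndependent_iff] at hdep
  push_neg at hdep
  obtain ⟨l, hl0, hlne⟩ := hdep
  set r := l.support.sup id with hr
  have hsupp : ∀ t, r < t → l t = 0 := by
    intro t ht
    by_contra hne
    have : t ≤ r := Finset.le_sup (f := id) (Finsupp.mem_support_iff.mpr hne)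
    omega
  have hsum : ∑ t ∈ Finset.range (r+2), l t • u t = 0 := by
    rw [Finsupp.linearCombination_apply, Finsupp.sum] at hl0
    rw [← hl0]
    refine (Finset.sum_subset ?_ ?_).symm
    · intro t ht
      rw [Finset.mem_range]
      have := Finset.le_sup (f := id) ht
      simp only [id] at this
      omega
    · intro t _ ht
      rw [Finsupp.notMem_support_iff.mp ht, zero_smul]
  have hsplit : (∑ s ∈ Finset.range (r+1), l (s+1) • W s) + l 0 • (1 : Matrix ι ι k) = 0 := by
    have h := hsum
    rw [Finset.sum_range_succ'] at h
    simp only [husucc, hu0] at h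
    exact h
  set N := r + 1 with hN
  set a : ℕ → k := fun s => l (s+1) with ha
  have hrel : ∑ s ∈ Finset.range N, a s • W s = (- l 0) • (1 : Matrix ι ι k) := by
    rw [neg_smul, eq_neg_iff_add_eq_zero]
    exact hsplit
  have haN : ∀ s, N ≤ s → a s = 0 := fun s hs => hsupp (s+1) (by omega)
  have hane : ∃ s, s < N ∧ a s ≠ 0 := by
    by_contra hcon
    push_neg at hcon
    have hall : ∀ s, a s = 0 := by
      intro s
      by_cases h : s < N
      · exact hcon s h
      · exact haN s (by omega)
    have h1 : l 0 • (1 : Matrix ι ι k) = 0 := by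
      rw [← hsplit, Finset.sum_eq_zero
        (fun s _ => by rw [show l (s+1) = a s from rfl, hall, zero_smul]), zero_add]
    have hl00 : l 0 = 0 := by
      have h2 := congrArg (fun M : Matrix ι ι k =>
        M (Classical.arbitrary ι) (Classical.arbitrary ι)) h1
      simpa [Matrix.one_apply] using h2
    apply hlne
    ext t
    cases t with
    | zero => exact hl00
    | succ s => exact hall s
  obtain ⟨s₀, hs₀N, hs₀⟩ := hane
  -- the chain
  set ε : ℕ → ℕ → k := fun j s => (-1)^j * (a s)^(p^j) with hε
  set C : ℕ → Matrix ι ι k := fun j =>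
    ∑ t ∈ Finset.range (N - j), ε j (j + t) • T^[t] 1 with hC
  set δ : ℕ → k := fun s => match s with
    | 0 => - l 0
    | j+1 => (ε j j)^p with hδ
  have hδ0 : δ 0 = - l 0 := rfl
  have hδsucc : ∀ j, δ (j+1) = (ε j j)^p := fun j => rfl
  have hmapsum : ∀ (s : Finset ℕ) (f : ℕ → Matrix ι ι k),
      (∑ t ∈ s, f t).map φ = ∑ t ∈ s, (f t).map φ := by
    intro s f; ext i j
    simp [Matrix.map_apply, Matrix.sum_apply, map_sum]
  have hmapsmul : ∀ (c : k) (M : Matrix ι ι k), (c • M).map φ = φ c • M.map φ := by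
    intro c M; ext i j
    simp [Matrix.map_apply, map_mul]
  have hmap1 : (1 : Matrix ι ι k).map φ = 1 :=
    Matrix.map_one φ (map_zero φ) (map_one φ)
  have hεp : ∀ j s, (ε j s)^p = - ε (j+1) s := by
    intro j s
    have h1 : ((a s)^(p^j))^p = (a s)^(p^(j+1)) := by rw [← pow_mul, pow_succ]
    have h2 : (((-1):k)^j)^p = (-1)^j := by
      rw [← pow_mul, mul_comm, pow_mul, neg_one_pow_char k]
    rw [hε]
    simp only
    rw [mul_pow, h1, h2, pow_succ]
    ring
  have hR0 : B * C 0 = δ 0 • 1 := by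
    rw [hC]
    simp only [Nat.sub_zero, Finset.mul_sum, Matrix.mul_smul]
    have heq : ∀ t ∈ Finset.range N, ε 0 (0 + t) • (B * T^[t] 1) = a t • W t := by
      intro t _
      rw [hε, hW]
      simp
    rw [Finset.sum_congr rfl heq, hrel, hδ0]
  have hRj : ∀ j, (C j).map φ + B * C (j+1) = δ (j+1) • 1 := by
    intro j
    by_cases hj : j < N
    · have hNj : N - j = (N - j - 1) + 1 := by omega
      have hNj1 : N - (j+1) = N - j - 1 := by omega
      have e1 : (C j).map φ
          = (∑ t ∈ Finset.range (N-j-1), (-(ε (j+1) (j+t+1))) • W t)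
            + (ε j j)^p • (1 : Matrix ι ι k) := by
        rw [hC]
        simp only
        rw [hNj, Finset.sum_range_succ',
          Matrix.map_add _ (fun x y => map_add φ x y), hmapsum]
        congr 1
        · refine Finset.sum_congr rfl fun t _ => ?_
          rw [hmapsmul, hφ, hεp, Function.iterate_succ_apply', hTφ,
            show j + (t + 1) = j + t + 1 from by omega]
        · rw [hmapsmul, hφ, Function.iterate_zero_apply, hmap1, Nat.add_zero]
      have e2 : B * C (j+1)
          = ∑ t ∈ Finset.range (N-j-1), ε (j+1) (j+t+1) • W t := by
        rw [hC]
        simp only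
        rw [hNj1, Finset.mul_sum]
        refine Finset.sum_congr rfl fun t _ => ?_
        rw [Matrix.mul_smul, show j + 1 + t = j + t + 1 from by omega]
      rw [e1, e2, hδsucc]
      have hz : (∑ t ∈ Finset.range (N-j-1), (-(ε (j+1) (j+t+1))) • W t)
          + (∑ t ∈ Finset.range (N-j-1), ε (j+1) (j+t+1) • W t) = 0 := by
        rw [← Finset.sum_add_distrib]
        refine Finset.sum_eq_zero fun t _ => by rw [neg_smul, neg_add_cancel]
      calc (∑ t ∈ Finset.range (N-j-1), (-(ε (j+1) (j+t+1))) • W t)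
            + (ε j j)^p • (1 : Matrix ι ι k)
            + (∑ t ∈ Finset.range (N-j-1), ε (j+1) (j+t+1) • W t)
          = (ε j j)^p • (1 : Matrix ι ι k)
            + ((∑ t ∈ Finset.range (N-j-1), (-(ε (j+1) (j+t+1))) • W t)
              + (∑ t ∈ Finset.range (N-j-1), ε (j+1) (j+t+1) • W t)) := by abel
        _ = (ε j j)^p • (1 : Matrix ι ι k) := by rw [hz, add_zero]
    · have hCj : C j = 0 := by
        rw [hC]; simp only
        rw [show N - j = 0 by omega]
        simp
      have hCj1 : C (j+1) = 0 := by
        rw [hC]; simp only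
        rw [show N - (j+1) = 0 by omega]
        simp
      have hεjj : ε j j = 0 := by
        rw [hε]
        simp only
        rw [haN j (by omega), zero_pow (by positivity), mul_zero]
      rw [hCj, hCj1, hδsucc, hεjj, zero_pow (by omega : p ≠ 0), zero_smul,
        Matrix.map_zero _ (map_zero φ), mul_zero, add_zero]
  have hCN : C N = 0 := by
    rw [hC]; simp only
    rw [Nat.sub_self]
    simp
  -- the main identity
  set xp : (ι → k) → ℕ → (ι → k) := fun x j => fun i => x i ^ p ^ j with hxp
  set S : (ι → k) → (ι → k) := fun x => ∑ j ∈ Finset.range N, (C j).mulVec (xp x j) with hS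
  have main : ∀ (x : ι → k),
      (fun i => (S x i) ^ p) + B.mulVec (S x)
        = ∑ s ∈ Finset.range (N+1), δ s • xp x s := by
    intro x
    have part1 : (fun i => (S x i) ^ p)
        = ∑ j ∈ Finset.range N, ((C j).map φ).mulVec (xp x (j+1)) := by
      funext i
      rw [hS]
      simp only [Finset.sum_apply]
      rw [← hφ, map_sum]
      refine Finset.sum_congr rfl fun j _ => ?_
      simp only [Matrix.mulVec, dotProduct, Matrix.map_apply]
      rw [map_sum]
      refine Finset.sum_congr rfl fun i' _ => ?_
      rw [map_mul, hφ, hφ, hxp]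
      simp only
      rw [← pow_mul, ← pow_succ]
    have part2 : B.mulVec (S x)
        = ∑ j ∈ Finset.range N, (B * C j).mulVec (xp x j) := by
      rw [hS]
      have hlin : B.mulVec (∑ j ∈ Finset.range N, (C j).mulVec (xp x j))
          = ∑ j ∈ Finset.range N, B.mulVec ((C j).mulVec (xp x j)) := by
        rw [← Matrix.mulVecLin_apply, map_sum]
        simp [Matrix.mulVecLin_apply]
      rw [hlin]
      exact Finset.sum_congr rfl fun j _ => Matrix.mulVec_mulVec _ _ _
    have part2' : B.mulVec (S x)
        = (δ 0) • (xp x 0) + ∑ j ∈ Finset.range N, (B * C (j+1)).mulVec (xp x (j+1)) := by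
      rw [part2, hN, Finset.sum_range_succ', ← hN]
      have hpad : ∑ j ∈ Finset.range N, (B * C (j+1)).mulVec (xp x (j+1))
          = ∑ j ∈ Finset.range r, (B * C (j+1)).mulVec (xp x (j+1)) := by
        rw [hN, Finset.sum_range_succ, show r + 1 = N from rfl, hCN, mul_zero,
          Matrix.zero_mulVec, add_zero]
      rw [hpad, hR0, Matrix.smul_mulVec, Matrix.one_mulVec]
      abel
    have hterm : ∀ j, ((C j).map φ).mulVec (xp x (j+1)) + (B * C (j+1)).mulVec (xp x (j+1))
        = δ (j+1) • xp x (j+1) := by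
      intro j
      rw [← Matrix.add_mulVec, hRj, Matrix.smul_mulVec, Matrix.one_mulVec]
    have hcomb : ∑ j ∈ Finset.range N, ((C j).map φ).mulVec (xp x (j+1))
        + ∑ j ∈ Finset.range N, (B * C (j+1)).mulVec (xp x (j+1))
        = ∑ j ∈ Finset.range N, δ (j+1) • xp x (j+1) := by
      rw [← Finset.sum_add_distrib]
      exact Finset.sum_congr rfl fun j _ => hterm j
    rw [part1, part2']
    conv_rhs => rw [Finset.sum_range_succ']
    rw [← hcomb]
    abel
  -- δ is not identically zero
  have hδne : δ (s₀+1) ≠ 0 := by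
    rw [hδsucc, hε]
    simp only
    apply pow_ne_zero
    apply mul_ne_zero
    · exact pow_ne_zero _ (neg_ne_zero.mpr one_ne_zero)
    · exact pow_ne_zero _ hs₀
  set SS := (Finset.range (N+1)).filter (fun s => δ s ≠ 0) with hSS
  have hSSne : SS.Nonempty := by
    refine ⟨s₀+1, ?_⟩
    rw [hSS, Finset.mem_filter, Finset.mem_range]
    exact ⟨by omega, hδne⟩
  set smax := SS.max' hSSne with hsmax
  have hsmaxmem : smax ∈ SS := Finset.max'_mem _ _
  have hsmaxrange : smax ∈ Finset.range (N+1) := (Finset.mem_filter.mp hsmaxmem).1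
  have hsmaxne : δ smax ≠ 0 := (Finset.mem_filter.mp hsmaxmem).2
  -- solve each coordinate
  have hcoord : ∀ c : k, ∃ z : k, ∑ s ∈ Finset.range (N+1), δ s * z ^ p ^ s = c := by
    intro c
    set P : Polynomial k :=
      (∑ s ∈ Finset.range (N+1), Polynomial.C (δ s) * Polynomial.X ^ (p ^ s))
        - Polynomial.C c with hP
    have hps : (0:ℕ) < p ^ smax := pow_pos (by omega) _
    have hcoeff : P.coeff (p ^ smax) = δ smax := by
      rw [hP, Polynomial.coeff_sub, Polynomial.finset_sum_coeff]
      rw [Polynomial.coeff_C, if_neg (by omega), sub_zero]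
      rw [Finset.sum_eq_single smax]
      · rw [Polynomial.coeff_C_mul, Polynomial.coeff_X_pow, if_pos rfl, mul_one]
      · intro s _ hsne
        rw [Polynomial.coeff_C_mul, Polynomial.coeff_X_pow, if_neg, mul_zero]
        intro hpe
        exact hsne (Nat.pow_right_injective hp2 hpe).symm
      · intro hnot; exact absurd hsmaxrange hnot
    have hdeg : P.degree ≠ 0 := by
      intro h0
      have hle := Polynomial.le_degree_of_ne_zero (n := p ^ smax)
        (by rw [hcoeff]; exact hsmaxne)
      rw [h0] at hle
      have : p ^ smax ≤ 0 := by exact_mod_cast hle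
      omega
    obtain ⟨z, hz⟩ := IsAlgClosed.exists_root P hdeg
    refine ⟨z, ?_⟩
    rw [Polynomial.IsRoot, hP, Polynomial.eval_sub, Polynomial.eval_finset_sum,
      sub_eq_zero, Polynomial.eval_C] at hz
    rw [← hz]
    exact Finset.sum_congr rfl fun s _ => by
      rw [Polynomial.eval_mul, Polynomial.eval_C, Polynomial.eval_pow, Polynomial.eval_X]
  choose z hzspec using fun i => hcoord (y i)
  refine ⟨S z, fun i => ?_⟩
  have hmain := congrFun (main z) i
  simp only [Pi.add_apply, Finset.sum_apply, Pi.smul_apply, smul_eq_mul] at hmain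
  rw [hmain]
  exact hzspec i

end Core

section Red

variable {k : Type*} [Field k] [IsAlgClosed k] (p : ℕ) [Fact p.Prime] [CharP k p]

lemma coeff_pow_char' {σ : Type*} (f : MvPolynomial σ k) (m : σ →₀ ℕ) :
    coeff (p • m) (f ^ p) = coeff m f ^ p := by
  classical
  have hp0 : p ≠ 0 := Nat.Prime.ne_zero Fact.out
  have hsm : ∀ v w : σ →₀ ℕ, p • v = p • w → v = w := by
    intro v w hvw
    ext i
    have := DFunLike.congr_fun hvw i
    simp only [Finsupp.smul_apply, smul_eq_mul] at this
    exact Nat.eq_of_mul_eq_mul_left (by omega) this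
  have hfrob : f ^ p = ∑ v ∈ f.support, monomial (p • v) (coeff v f ^ p) := by
    conv_lhs => rw [f.as_sum]
    rw [show ∀ q : MvPolynomial σ k, q ^ p = frobenius (MvPolynomial σ k) p q from
      fun q => rfl]
    rw [map_sum]
    refine Finset.sum_congr rfl fun v _ => ?_
    rw [show frobenius (MvPolynomial σ k) p (monomial v (coeff v f))
      = (monomial v (coeff v f)) ^ p from rfl, monomial_pow]
  rw [hfrob, coeff_sum]
  by_cases hm : m ∈ f.support
  · rw [Finset.sum_eq_single m]
    · rw [coeff_monomial, if_pos rfl]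
    · intro v _ hvne
      rw [coeff_monomial, if_neg]
      intro hc
      exact hvne (hsm v m hc)
    · intro hnot
      exact absurd hm hnot
  · rw [Finset.sum_eq_zero, MvPolynomial.notMem_support_iff.mp hm, zero_pow hp0]
    intro v hv
    rw [coeff_monomial, if_neg]
    intro hc
    rw [hsm v m hc] at hv
    exact hm hv

end Red


/-- The key Lemma of the paper (multivariate form): over an algebraically closed field of
characteristic `p > 0`, if `degᵢ g = (p-1) * degᵢ u` for every variable, then there is `h`
with `degᵢ h ≤ degᵢ u` such that the `p`-th power part of `h^p + g*h` equals `u^p`. -/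
theorem pth_power_part_prescribed
    (k : Type*) [Field k] [IsAlgClosed k] (p : ℕ) [CharP k p] (hp : 0 < p)
    (n : ℕ) (u g : MvPolynomial (Fin n) k)
    (hdeg : ∀ i : Fin n, degreeOf i g = (p - 1) * degreeOf i u) :
    ∃ h : MvPolynomial (Fin n) k,
      (∀ i : Fin n, degreeOf i h ≤ degreeOf i u) ∧
      ∀ m : Fin n →₀ ℕ, (∀ i : Fin n, p ∣ m i) →
        coeff m (h ^ p + g * h) = coeff m (u ^ p) := by
  classical
  have hpp : p.Prime := (CharP.char_is_prime_or_zero k p).resolve_right (by omega)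
  haveI : Fact p.Prime := ⟨hpp⟩
  set d : Fin n → ℕ := fun i => degreeOf i u with hd
  let ι : Type := ∀ i : Fin n, Fin (d i + 1)
  let emb : ι → (Fin n →₀ ℕ) := fun v => Finsupp.equivFunOnFinite.symm (fun i => (v i : ℕ))
  have hemb : ∀ (v : ι) (i : Fin n), emb v i = v i := fun v i => rfl
  have hembinj : Function.Injective emb := by
    intro v w hvw
    funext i
    exact Fin.ext (by rw [← hemb v i, ← hemb w i, hvw])
  set B : Matrix ι ι k := fun w v =>
    if emb v ≤ p • emb w then coeff (p • emb w - emb v) g else 0 with hB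
  set y : ι → k := fun w => coeff (emb w) u ^ p with hy
  obtain ⟨c, hc⟩ := key_surj p B y
  set h : MvPolynomial (Fin n) k := ∑ v : ι, monomial (emb v) (c v) with hh
  have hcoeffh1 : ∀ v : ι, coeff (emb v) h = c v := by
    intro v
    rw [hh, coeff_sum]
    rw [Finset.sum_eq_single v]
    · rw [coeff_monomial, if_pos rfl]
    · intro w _ hwne
      rw [coeff_monomial, if_neg (fun hc' => hwne (hembinj hc'))]
    · intro hnot
      exact absurd (Finset.mem_univ v) hnot
  have hcoeffh0 : ∀ b : Fin n →₀ ℕ, ¬ (∀ i, b i ≤ d i) → coeff b h = 0 := by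
    intro b hb
    rw [hh, coeff_sum]
    refine Finset.sum_eq_zero fun w _ => ?_
    rw [coeff_monomial, if_neg]
    intro hceq
    apply hb
    intro i
    rw [← hceq, hemb w i]
    exact Nat.lt_succ_iff.mp (w i).isLt
  have hdegh : ∀ i, degreeOf i h ≤ d i := by
    intro i
    rw [degreeOf_eq_sup]
    refine Finset.sup_le fun b hb => ?_
    by_contra hgt
    exact (mem_support_iff.mp hb) (hcoeffh0 b (fun hall => hgt (hall i)))
  refine ⟨h, hdegh, ?_⟩
  intro m hm
  set mt : Fin n →₀ ℕ := Finsupp.equivFunOnFinite.symm (fun i => m i / p) with hmt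
  have hmti : ∀ i, mt i = m i / p := fun i => rfl
  have hmteq : p • mt = m := by
    ext i
    rw [Finsupp.smul_apply, smul_eq_mul, hmti i]
    exact Nat.mul_div_cancel' (hm i)
  have hhp : coeff m (h ^ p) = coeff mt h ^ p := by rw [← hmteq, coeff_pow_char']
  have hup : coeff m (u ^ p) = coeff mt u ^ p := by rw [← hmteq, coeff_pow_char']
  rw [coeff_add, hhp, hup]
  by_cases hbox : ∀ i, mt i ≤ d i
  · set w : ι := fun i => ⟨mt i, Nat.lt_succ_of_le (hbox i)⟩ with hw
    have hembw : emb w = mt := by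
      ext i
      rw [hemb w i]
    have hgh : coeff m (g * h) = ∑ v : ι, B w v * c v := by
      rw [hh, Finset.mul_sum, coeff_sum]
      refine Finset.sum_congr rfl fun v _ => ?_
      rw [coeff_mul_monomial', hB]
      simp only
      rw [hembw, hmteq]
      split_ifs
      · rfl
      · rw [zero_mul]
    rw [hgh, show coeff mt h = c w by rw [← hembw, hcoeffh1]]
    have hmv : B.mulVec c w = ∑ v : ι, B w v * c v := rfl
    rw [← hmv, hc w, hy]
    simp only
    rw [hembw]
  · have h1 : coeff mt h = 0 := hcoeffh0 mt hbox
    have h2 : coeff mt u = 0 := by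
      by_contra hne
      push_neg at hbox
      obtain ⟨i, hi⟩ := hbox
      have hle2 : mt i ≤ degreeOf i u := by
        rw [degreeOf_eq_sup]
        exact Finset.le_sup (f := fun m' => m' i) (mem_support_iff.mpr hne)
      exact absurd hle2 (not_le.mpr hi)
    have h3 : coeff m (g * h) = 0 := by
      push_neg at hbox
      obtain ⟨i, hi⟩ := hbox
      by_contra hne
      have hle : m i ≤ degreeOf i (g * h) := by
        rw [degreeOf_eq_sup]
        exact Finset.le_sup (f := fun m' => m' i) (mem_support_iff.mpr hne)
      have e1 : degreeOf i (g * h) ≤ (p-1) * d i + d i :=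
        le_trans (degreeOf_mul_le i g h) (add_le_add (le_of_eq (hdeg i)) (hdegh i))
      have e2 : (p-1) * d i + d i = p * d i := by
        cases p with
        | zero => omega
        | succ q => simp only [Nat.succ_sub_one]; ring
      have e3 : p * d i < p * mt i := by
        have hmt1 : d i + 1 ≤ mt i := hi
        calc p * d i < p * (d i + 1) := by
              have : p * (d i + 1) = p * d i + p := by ring
              omega
          _ ≤ p * mt i := Nat.mul_le_mul_left p hmt1
      have hmi : m i = p * mt i := by
        rw [← hmteq, Finsupp.smul_apply, smul_eq_mul]
      linarith
    rw [h1, h2, h3]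
    simp [zero_pow (show p ≠ 0 by omega)]
end

section
/- Let k be an algebraically closed field of characteristic p > 0. Let u and g be polynomials in one variable over k with natDegree g = (p−1) · natDegree u. Then there exists a polynomial h over k with natDegree h ≤ natDegree u such that for every natural number j divisible by p, the coefficient of X^j in h^p + g·h equals the coefficient of X^j in u^p. -/
/-!
Comparing coefficients of `X ^ (p * j)`, the claim for `j ≤ n = natDegree u` is the system
`a j ^ p + ∑ i, g.coeff (p * j - i) * a i = u.coeff j ^ p` in the coefficients `a` of `h`, while
for `j > n` all terms vanish for degree reasons. The system reads `φ a + L a = b` with `φ` a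
bijective Frobenius-semilinear map and `L` linear, and over an algebraically closed field such a
map `φ + L` is onto (a linear form of Lang's theorem). By induction on the dimension it suffices
to find `v ≠ 0` with `L v ∈ k ∙ φ v`: modulo these lines the equation is solved by induction, and
the correction along `v` is a root of `t ^ p + μ * t + c`. Such a `v` lies in `ker L` or, if `L` is
invertible, is a fixed vector of `L⁻¹ ∘ φ`; in the span of the iterates of any nonzero vector the
fixed point equation becomes a separable polynomial equation in one variable.
-/

open Finset Polynomial Module Submodule

theorem exists_notMem_span_image_range_and_succ_mem {K V : Type*} [DivisionRing K]
    [AddCommGroup V] [Module K V] [FiniteDimensional K V] (w : ℕ → V) (hw : w 0 ≠ 0) :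
    ∃ M, w M ∉ span K (w '' ↑(range M)) ∧ w (M + 1) ∈ span K (w '' ↑(range (M + 1))) := by
  classical
  let U : ℕ →o Submodule K V :=
    ⟨fun j => span K (w '' ↑(range j)),
      fun i j hij => span_mono (Set.image_mono (by simpa using hij))⟩
  obtain ⟨n, hn⟩ := monotone_stabilizes_iff_noetherian.mpr inferInstance U
  have hex : ∃ j, w j ∈ U j :=
    ⟨n, (hn (n + 1) n.le_succ).symm ▸ subset_span ⟨n, by simp, rfl⟩⟩
  obtain ⟨M, hM⟩ : ∃ M, Nat.find hex = M + 1 :=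
    Nat.exists_eq_succ_of_ne_zero fun h => by
      have h0 := Nat.find_spec hex
      rw [h] at h0
      simp [U, hw] at h0
  exact ⟨M, Nat.find_min hex (by omega), hM ▸ Nat.find_spec hex⟩

section FixedVectorCoeff

variable {k : Type*} [Field k]

/-- If `ψ` is Frobenius-semilinear and `ψ^[M + 1] e = ∑ i ≤ M, c i • ψ^[i] e`, then the vector
`∑ i ≤ M, (fixedVectorCoeff p c i).eval t • ψ^[i] e` is fixed by `ψ` as soon as its last
coefficient is `t`. -/
noncomputable def fixedVectorCoeff (p : ℕ) (c : ℕ → k) : ℕ → k[X]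
  | 0 => C (c 0) * X ^ p
  | i + 1 => fixedVectorCoeff p c i ^ p + C (c (i + 1)) * X ^ p

variable {p : ℕ} {c : ℕ → k}

theorem natDegree_fixedVectorCoeff (hp : 1 < p) (hc : c 0 ≠ 0) (i : ℕ) :
    (fixedVectorCoeff p c i).natDegree = p ^ (i + 1) := by
  induction i with
  | zero => simp [fixedVectorCoeff, natDegree_C_mul_X_pow _ _ hc]
  | succ i ih =>
    have hpow : (fixedVectorCoeff p c i ^ p).natDegree = p ^ (i + 2) := by
      rw [natDegree_pow, ih, pow_succ' _ (i + 1)]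
    rw [fixedVectorCoeff, natDegree_add_eq_left_of_natDegree_lt, hpow]
    calc (C (c (i + 1)) * X ^ p).natDegree ≤ p ^ 1 :=
          (natDegree_C_mul_X_pow_le _ _).trans_eq (pow_one p).symm
      _ < _ := by rw [hpow]; exact Nat.pow_lt_pow_right hp (by omega)

theorem derivative_fixedVectorCoeff [CharP k p] (i : ℕ) :
    derivative (fixedVectorCoeff p c i) = 0 := by
  induction i with
  | zero => simp [fixedVectorCoeff, derivative_X_pow]
  | succ i ih => simp [fixedVectorCoeff, derivative_pow, ih]

theorem exists_ne_zero_eval_fixedVectorCoeff_eq [IsAlgClosed k] [CharP k p] (hp : 1 < p)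
    (hc : c 0 ≠ 0) (M : ℕ) : ∃ t ≠ 0, (fixedVectorCoeff p c M).eval t = t := by
  classical
  set f := fixedVectorCoeff p c M - X
  have hdeg : 2 ≤ f.natDegree := by
    rw [natDegree_sub_eq_left_of_natDegree_lt, natDegree_fixedVectorCoeff hp hc]
    · exact hp.trans_le (Nat.le_self_pow (by omega) _)
    · rw [natDegree_fixedVectorCoeff hp hc, natDegree_X]
      exact Nat.one_lt_pow (by omega) hp
  -- `f` has at least two roots, and they are distinct because `derivative f = -1`.
  have hsep : f.Separable := by
    rw [separable_def, derivative_sub, derivative_fixedVectorCoeff, derivative_X, zero_sub]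
    exact isCoprime_one_right.neg_right
  have hcard : 1 < f.roots.toFinset.card := by
    rw [Multiset.toFinset_card_of_nodup (nodup_roots hsep), IsAlgClosed.card_roots_eq_natDegree]
    omega
  obtain ⟨t, ht, ht0⟩ := Finset.exists_mem_ne hcard 0
  have hf0 : f ≠ 0 := fun h => by simp [h] at hdeg
  refine ⟨t, ht0, ?_⟩
  simpa [f, sub_eq_zero] using (mem_roots hf0).1 (Multiset.mem_toFinset.1 ht)

end FixedVectorCoeff

section FixedVector

variable {k V : Type*} [Field k] {p : ℕ} [Fact p.Prime] [CharP k p]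
  [AddCommGroup V] [Module k V]

theorem apply_sum_fixedVectorCoeff_smul_iterate_eq_self (ψ : V →ₛₗ[frobenius k p] V) (e : V)
    {M : ℕ} {c : ℕ → k} (hc : ψ^[M + 1] e = ∑ i ∈ range (M + 1), c i • ψ^[i] e)
    {t : k} (ht : (fixedVectorCoeff p c M).eval t = t) :
    ψ (∑ i ∈ range (M + 1), (fixedVectorCoeff p c i).eval t • ψ^[i] e) =
      ∑ i ∈ range (M + 1), (fixedVectorCoeff p c i).eval t • ψ^[i] e := by
  set a := fun i => (fixedVectorCoeff p c i).eval t
  have ha0 : a 0 = c 0 * t ^ p := by simp [a, fixedVectorCoeff]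
  have ha : ∀ i, a (i + 1) = a i ^ p + c (i + 1) * t ^ p := by simp [a, fixedVectorCoeff]
  calc ψ (∑ i ∈ range (M + 1), a i • ψ^[i] e)
      = ∑ i ∈ range M, a i ^ p • ψ^[i + 1] e
          + t ^ p • ∑ i ∈ range (M + 1), c i • ψ^[i] e := by
        rw [map_sum, sum_range_succ, LinearMap.map_smulₛₗ, ← Function.iterate_succ_apply' ψ, hc]
        simp only [a, ht, LinearMap.map_smulₛₗ, ← Function.iterate_succ_apply' ψ,
          frobenius_def]
    _ = ∑ i ∈ range M, (a i ^ p + c (i + 1) * t ^ p) • ψ^[i + 1] e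
          + (c 0 * t ^ p) • e := by
        rw [smul_sum, sum_range_succ', ← add_assoc, ← sum_add_distrib]
        simp only [add_smul, smul_smul, mul_comm, Function.iterate_zero_apply]
    _ = ∑ i ∈ range (M + 1), a i • ψ^[i] e := by
        rw [sum_range_succ' _ M, ha0]
        simp only [ha, Function.iterate_zero_apply]

theorem exists_ne_zero_semilinear_apply_eq_self [IsAlgClosed k] [FiniteDimensional k V]
    [Nontrivial V] {ψ : V →ₛₗ[frobenius k p] V} (hψ : Function.Injective ψ) :
    ∃ v ≠ 0, ψ v = v := by
  obtain ⟨e, he⟩ := exists_ne (0 : V)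
  obtain ⟨M, hM, hrel⟩ :=
    exists_notMem_span_image_range_and_succ_mem (K := k) (fun i => ψ^[i] e) he
  obtain ⟨c, hc⟩ := (mem_span_image_finset_iff_exists_fun' k).1 hrel
  -- Otherwise `ψ^[M + 1] e`, hence by injectivity `ψ^[M] e`, is a combination of earlier iterates.
  have hc0 : c 0 ≠ 0 := by
    intro h0
    apply hM
    have : ψ^[M] e = ∑ i ∈ range M, (frobeniusEquiv k p).symm (c (i + 1)) • ψ^[i] e := hψ (by
      rw [← Function.iterate_succ_apply' ψ, ← hc, sum_range_succ', h0, zero_smul, add_zero,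
        map_sum]
      refine sum_congr rfl fun i _ => ?_
      rw [LinearMap.map_smulₛₗ, ← Function.iterate_succ_apply' ψ, ← coe_frobeniusEquiv,
        RingEquiv.apply_symm_apply])
    rw [this]
    exact (mem_span_image_finset_iff_exists_fun' k).2 ⟨_, rfl⟩
  obtain ⟨t, ht0, ht⟩ :=
    exists_ne_zero_eval_fixedVectorCoeff_eq (Fact.out : p.Prime).one_lt hc0 M
  refine ⟨_, ?_, apply_sum_fixedVectorCoeff_smul_iterate_eq_self ψ e hc.symm ht⟩
  rw [sum_range_succ, ht]
  intro hv
  apply hM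
  rw [← smul_mem_iff _ ht0, eq_neg_of_add_eq_zero_right hv]
  exact neg_mem ((mem_span_image_finset_iff_exists_fun' k).2 ⟨_, rfl⟩)

end FixedVector

theorem exists_pow_add_mul_add_eq_zero {k : Type*} [Field k] [IsAlgClosed k] {p : ℕ}
    (hp : 1 < p) (a b : k) : ∃ t : k, t ^ p + a * t + b = 0 := by
  have hdeg : (X ^ p + C a * X + C b).natDegree = p := by
    compute_degree!
    all_goals first | omega | simp [(zero_lt_one.trans hp).ne', hp.ne']
  obtain ⟨t, ht⟩ := IsAlgClosed.exists_root (X ^ p + C a * X + C b)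
    (natDegree_pos_iff_degree_pos.1 (by omega)).ne'
  exact ⟨t, by simpa using ht⟩

section Lang

variable {k V W : Type*} [Field k] {p : ℕ} [Fact p.Prime] [CharP k p]
  [AddCommGroup V] [Module k V] [AddCommGroup W] [Module k W]

theorem exists_ne_zero_linear_eq_smul_semilinear [IsAlgClosed k] [FiniteDimensional k V]
    [FiniteDimensional k W] [Nontrivial V] (hdim : finrank k V = finrank k W)
    {φ : V →ₛₗ[frobenius k p] W} (hφ : Function.Injective φ) (L : V →ₗ[k] W) :
    ∃ v ≠ 0, ∃ μ : k, L v = μ • φ v := by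
  by_cases hL : Function.Injective L
  · let e := LinearEquiv.ofBijective L
      ⟨hL, (L.injective_iff_surjective_of_finrank_eq_finrank hdim).1 hL⟩
    obtain ⟨v, hv, hfix⟩ := exists_ne_zero_semilinear_apply_eq_self
      (ψ := e.symm.toLinearMap ∘ₛₗ φ) (e.symm.injective.comp hφ)
    refine ⟨v, hv, 1, ?_⟩
    rw [one_smul]
    conv_lhs => rw [← hfix]
    exact e.apply_symm_apply _
  · obtain ⟨v, hLv, hv⟩ : ∃ v, L v = 0 ∧ v ≠ 0 := by
      simpa [injective_iff_map_eq_zero] using hL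
    exact ⟨v, hv, 0, by rw [hLv, zero_smul]⟩

theorem exists_semilinear_add_linear_eq_of_sub_mem_span [IsAlgClosed k]
    {φ : V →ₛₗ[frobenius k p] W} {L : V →ₗ[k] W} {v : V} {μ : k} (hLv : L v = μ • φ v)
    {x₀ : V} {d : W} (hx₀ : φ x₀ + L x₀ - d ∈ k ∙ φ v) : ∃ x, φ x + L x = d := by
  obtain ⟨c, hc⟩ := mem_span_singleton.1 hx₀
  obtain ⟨t, ht⟩ := exists_pow_add_mul_add_eq_zero (Fact.out : p.Prime).one_lt μ c
  refine ⟨x₀ + t • v, ?_⟩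
  calc φ (x₀ + t • v) + L (x₀ + t • v)
      = (φ x₀ + L x₀ - d) + (t ^ p + μ * t) • φ v + d := by
        rw [map_add, map_add, LinearMap.map_smulₛₗ, map_smul, hLv, frobenius_def, smul_smul,
          add_smul, mul_comm]
        abel
    _ = (t ^ p + μ * t + c) • φ v + d := by rw [← hc, add_smul _ c]; abel
    _ = d := by rw [ht, zero_smul, zero_add]

theorem bijective_mapQ_span_singleton [PerfectRing k p] {φ : V →ₛₗ[frobenius k p] W}
    (hφ : Function.Bijective φ) (v : V) :
    Function.Bijective ((k ∙ v).mapQ (k ∙ φ v) φ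
      ((span_singleton_le_iff_mem _ _).2 (mem_span_singleton_self _))) := by
  refine ⟨(injective_iff_map_eq_zero _).2 fun x hx => ?_, fun y => ?_⟩
  · obtain ⟨a, rfl⟩ := Submodule.Quotient.mk_surjective _ x
    rw [mapQ_apply, Submodule.Quotient.mk_eq_zero, mem_span_singleton] at hx
    obtain ⟨c, hc⟩ := hx
    rw [Submodule.Quotient.mk_eq_zero, mem_span_singleton]
    refine ⟨(frobeniusEquiv k p).symm c, hφ.injective ?_⟩
    rw [LinearMap.map_smulₛₗ, ← coe_frobeniusEquiv, RingEquiv.apply_symm_apply, hc]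
  · obtain ⟨w, rfl⟩ := Submodule.Quotient.mk_surjective _ y
    obtain ⟨x, rfl⟩ := hφ.surjective w
    exact ⟨Submodule.Quotient.mk x, rfl⟩

theorem finrank_quotient_span_singleton_add_one [FiniteDimensional k V] {v : V} (hv : v ≠ 0) :
    finrank k (V ⧸ k ∙ v) + 1 = finrank k V := by
  rw [← finrank_span_singleton (K := k) hv, Submodule.finrank_quotient_add_finrank]

theorem exists_semilinear_add_linear_eq [IsAlgClosed k] [FiniteDimensional k V]
    [FiniteDimensional k W] (hdim : finrank k V = finrank k W) {φ : V →ₛₗ[frobenius k p] W}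
    (hφ : Function.Bijective φ) (L : V →ₗ[k] W) (d : W) : ∃ x, φ x + L x = d := by
  induction hn : finrank k V generalizing V W with
  | zero =>
    have : Subsingleton W := finrank_zero_iff.mp (hdim ▸ hn)
    exact ⟨0, Subsingleton.elim _ _⟩
  | succ n ih =>
    have : Nontrivial V := Module.nontrivial_of_finrank_eq_succ hn
    obtain ⟨v, hv, μ, hLv⟩ := exists_ne_zero_linear_eq_smul_semilinear hdim hφ.injective L
    have hφv : φ v ≠ 0 := fun h => hv (hφ.injective (h.trans (map_zero φ).symm))
    have hLle : k ∙ v ≤ (k ∙ φ v).comap L :=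
      (span_singleton_le_iff_mem _ _).2 (by
        rw [mem_comap, hLv]
        exact smul_mem _ _ (mem_span_singleton_self _))
    have hVq := finrank_quotient_span_singleton_add_one (k := k) hv
    have hWq := finrank_quotient_span_singleton_add_one (k := k) hφv
    obtain ⟨x₀, hx₀⟩ := ih (by omega) (bijective_mapQ_span_singleton hφ v)
      ((k ∙ v).mapQ _ L hLle) (Submodule.Quotient.mk d) (by omega)
    obtain ⟨x₀, rfl⟩ := Submodule.Quotient.mk_surjective _ x₀
    refine exists_semilinear_add_linear_eq_of_sub_mem_span hLv (x₀ := x₀) ?_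
    rwa [← Submodule.Quotient.mk_eq_zero, Submodule.Quotient.mk_sub,
      Submodule.Quotient.mk_add, sub_eq_zero]

end Lang

theorem Polynomial.coeff_pow_expChar_mul {R : Type*} [CommSemiring R] {p : ℕ} [ExpChar R p]
    (f : R[X]) (m : ℕ) : (f ^ p).coeff (p * m) = f.coeff m ^ p := by
  rw [← map_frobenius_expand, coeff_map, coeff_expand_mul' (expChar_pos R p), frobenius_def]

theorem exists_natDegree_le_forall_coeff_pow_add_coeff_mul_eq {k : Type*} [Field k]
    [IsAlgClosed k] {p : ℕ} [Fact p.Prime] [CharP k p] (g : k[X]) (n : ℕ) (b : ℕ → k) :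
    ∃ h : k[X], h.natDegree ≤ n ∧ ∀ j ≤ n, h.coeff j ^ p + (g * h).coeff (p * j) = b j := by
  let φ : degreeLT k (n + 1) →ₛₗ[frobenius k p] (Fin (n + 1) → k) :=
    LinearMap.frobenius k (Fin (n + 1) → k) p ∘ₛₗ (degreeLTEquiv k (n + 1)).toLinearMap
  let L : degreeLT k (n + 1) →ₗ[k] (Fin (n + 1) → k) :=
    LinearMap.pi fun j =>
      lcoeff k (p * j) ∘ₗ LinearMap.mulLeft k g ∘ₗ (degreeLT k (n + 1)).subtype
  have hφ : Function.Bijective φ :=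
    (Function.Bijective.piMap fun _ => bijective_frobenius k p).comp
      (degreeLTEquiv k (n + 1)).bijective
  have : FiniteDimensional k (degreeLT k (n + 1)) :=
    (degreeLTEquiv k (n + 1)).symm.finiteDimensional
  obtain ⟨⟨h, hmem⟩, hh⟩ :=
    exists_semilinear_add_linear_eq (degreeLTEquiv k (n + 1)).finrank_eq hφ L (fun j => b j)
  rw [degreeLT_succ_eq_degreeLE, mem_degreeLE, ← natDegree_le_iff_degree_le] at hmem
  exact ⟨h, hmem, fun j hj => congrFun hh ⟨j, by omega⟩⟩

/-- The one-variable case of the paper's Lemma: for polynomials `u, g` over an algebraically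
closed field of characteristic `p > 0` with `natDegree g = (p-1) * natDegree u`, there is `h`
with `natDegree h ≤ natDegree u` whose combination `h^p + g*h` has `p`-th power part `u^p`. -/
theorem pth_power_part_prescribed_one_var
    (k : Type*) [Field k] [IsAlgClosed k] (p : ℕ) [CharP k p] (hp : 0 < p)
    (u g : Polynomial k) (hdeg : g.natDegree = (p - 1) * u.natDegree) :
    ∃ h : Polynomial k, h.natDegree ≤ u.natDegree ∧
      ∀ j : ℕ, p ∣ j → (h ^ p + g * h).coeff j = (u ^ p).coeff j := by
  have : Fact p.Prime := ⟨CharP.char_prime_of_ne_zero k hp.ne'⟩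
  obtain ⟨h, hh, hcoeff⟩ :=
    exists_natDegree_le_forall_coeff_pow_add_coeff_mul_eq g u.natDegree (fun j => u.coeff j ^ p)
  refine ⟨h, hh, ?_⟩
  rintro _ ⟨m, rfl⟩
  rw [coeff_add, coeff_pow_expChar_mul, coeff_pow_expChar_mul]
  rcases le_or_gt m u.natDegree with hm | hm
  · exact hcoeff m hm
  · have hgh : (g * h).natDegree < p * m :=
      calc (g * h).natDegree ≤ (p - 1) * u.natDegree + u.natDegree :=
            hdeg ▸ natDegree_mul_le.trans (Nat.add_le_add_left hh _)
        _ = p * u.natDegree := by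
            rw [Nat.sub_one_mul, Nat.sub_add_cancel (Nat.le_mul_of_pos_left _ hp)]
        _ < p * m := Nat.mul_lt_mul_of_pos_left hm hp
    rw [coeff_eq_zero_of_natDegree_lt (hh.trans_lt hm), coeff_eq_zero_of_natDegree_lt hm,
      coeff_eq_zero_of_natDegree_lt hgh, add_zero]
end

section
/- Let k be an algebraically closed field of characteristic 2 and let f, g, u be polynomials in k[X₁,…,Xₙ] such that: (a) for every exponent vector m : Fin n →₀ ℕ with all components even, the coefficient of X^m in f equals the coefficient of X^m in u²; and (b) for each variable Xᵢ, the degree of g in Xᵢ equals the degree of u in Xᵢ. Then there exists a polynomial h ∈ k[X₁,…,Xₙ], with degree in each variable at most the degree of u in that variable, such that f + h² + g·h has zero square part: for every exponent vector m with all components even, the coefficient of X^m in f + h² + g·h is zero. -/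
/-!
Look for `h = ∑_{b ≤ D} a_b X^b`, where `D` is the box of partial degrees of `u`. In
characteristic 2 the coefficient of `X^{2j}` in `h²` is `a_j²`, so for `j ≤ D` the vanishing of
the coefficient of `X^{2j}` in `f + h² + g h` is an equation `a_j² + ∑_b L_{jb} a_b = f_{2j}`:
one equation per unknown. For `j ≰ D` all three coefficients vanish for degree reasons.

Such a system is solvable over an algebraically closed field. With `y_j = X_j² + ∑_b L_{jb} X_b`,
the ring `k[X]` is spanned over `k[y]` by the squarefree monomials, hence is integral over it.
So the `y_j` are algebraically independent (comparing transcendence degrees), and the maximal ideal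
`(y_j - t_j)_j` of `k[y]` lies under a maximal ideal of `k[X]`, i.e. under a point `a` with
`y_j(a) = t_j`.
-/

open Matrix MvPolynomial

namespace MvPolynomial

section QuadraticSystem

variable {R τ : Type*} [CommRing R] [Fintype τ]

noncomputable def sqAddMulVec (L : Matrix τ τ R) (j : τ) : MvPolynomial τ R :=
  X j ^ 2 + ∑ b, C (L j b) * X b

lemma eval_sqAddMulVec (L : Matrix τ τ R) (a : τ → R) (j : τ) :
    eval a (sqAddMulVec L j) = a j ^ 2 + (L *ᵥ a) j := by
  simp [sqAddMulVec, mulVec, dotProduct]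

lemma X_mul_prod_X_mem_span_prod_X (L : Matrix τ τ R) (S : Finset τ) (i : τ) :
    X i * ∏ j ∈ S, X j ∈ Submodule.span (Algebra.adjoin R (Set.range (sqAddMulVec L)))
      (Set.range fun S : Finset τ => ∏ j ∈ S, (X j : MvPolynomial τ R)) := by
  classical
  induction S using Finset.strongInduction generalizing i with
  | H S ih =>
  by_cases hi : i ∈ S
  · have key : ∀ P : MvPolynomial τ R,
        X i * (X i * P) = sqAddMulVec L i * P - ∑ b, L i b • (X b * P) := by
      intro P
      simp only [sqAddMulVec, smul_eq_C_mul, add_mul, Finset.sum_mul, mul_assoc]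
      ring
    rw [← Finset.mul_prod_erase S _ hi, key]
    refine Submodule.sub_mem _ ?_ (Submodule.sum_mem _ fun b _ => ?_)
    · exact Submodule.smul_mem _
        (⟨_, Algebra.subset_adjoin ⟨i, rfl⟩⟩ : Algebra.adjoin R (Set.range (sqAddMulVec L)))
        (Submodule.subset_span ⟨_, rfl⟩)
    · exact Submodule.smul_of_tower_mem _ _ (ih _ (Finset.erase_ssubset hi) b)
  · rw [← Finset.prod_insert hi]
    exact Submodule.subset_span ⟨_, rfl⟩

lemma span_prod_X_eq_top (L : Matrix τ τ R) :
    Submodule.span (Algebra.adjoin R (Set.range (sqAddMulVec L)))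
      (Set.range fun S : Finset τ => ∏ j ∈ S, (X j : MvPolynomial τ R)) = ⊤ := by
  set M := Submodule.span (Algebra.adjoin R (Set.range (sqAddMulVec L)))
      (Set.range fun S : Finset τ => ∏ j ∈ S, (X j : MvPolynomial τ R))
  have hX : ∀ i, ∀ p ∈ M, X i * p ∈ M := by
    intro i p hp
    induction hp using Submodule.span_induction with
    | mem _ hx => obtain ⟨S, rfl⟩ := hx; exact X_mul_prod_X_mem_span_prod_X L S i
    | zero => simp
    | add _ _ _ _ hp hq => rw [mul_add]; exact M.add_mem hp hq
    | smul a _ _ hp => rw [mul_smul_comm]; exact M.smul_mem a hp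
  rw [eq_top_iff]
  rintro p -
  induction p using MvPolynomial.induction_on with
  | C r =>
    rw [← mul_one (C r), ← smul_eq_C_mul]
    exact Submodule.smul_of_tower_mem _ _ (Submodule.subset_span ⟨∅, Finset.prod_empty⟩)
  | add _ _ hp hq => exact M.add_mem hp hq
  | mul_X p i hp => rw [mul_comm]; exact hX i p hp

instance (L : Matrix τ τ R) :
    Module.Finite (Algebra.adjoin R (Set.range (sqAddMulVec L))) (MvPolynomial τ R) :=
  ⟨Submodule.fg_def.mpr ⟨_, Set.finite_range _, span_prod_X_eq_top L⟩⟩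

lemma algebraicIndependent_sqAddMulVec {k : Type*} [Field k] (L : Matrix τ τ k) :
    AlgebraicIndependent k (sqAddMulVec L) :=
  (Algebra.IsAlgebraic.isTranscendenceBasis_of_lift_le_trdeg_of_finite k (sqAddMulVec L)
    (by simp)).1

end QuadraticSystem

end MvPolynomial

theorem Matrix.exists_sq_add_mulVec_eq {k τ : Type*} [Field k] [IsAlgClosed k] [Fintype τ]
    (L : Matrix τ τ k) (t : τ → k) : ∃ a : τ → k, a ^ 2 + L *ᵥ a = t := by
  have hy := algebraicIndependent_sqAddMulVec L
  set P := RingHom.ker ((eval t).comp hy.aevalEquiv.symm.toRingHom)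
  have : P.IsMaximal := RingHom.ker_isMaximal_of_surjective _ fun c =>
    ⟨hy.aevalEquiv (C c), by simp⟩
  obtain ⟨Q, hQ, hQP⟩ := Ideal.exists_ideal_over_maximal_of_isIntegral (S := MvPolynomial τ k) P
    (by rw [(RingHom.injective_iff_ker_eq_bot _).mp Subtype.val_injective]; exact bot_le)
  obtain ⟨a, rfl⟩ := (isMaximal_iff_eq_vanishingIdeal_singleton (K := k)).mp hQ
  refine ⟨a, funext fun j => ?_⟩
  have hj : hy.aevalEquiv (X j - C (t j)) ∈ P := by simp [P]
  rw [← hQP, Ideal.mem_comap, AlgebraicIndependent.algebraMap_aevalEquiv, map_sub, aeval_X,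
    aeval_C, mem_vanishingIdeal_singleton_iff, map_sub, aeval_eq_eval,
    eval_sqAddMulVec, algebraMap_eq, eval_C, sub_eq_zero] at hj
  exact hj

lemma Finsupp.exists_eq_two_nsmul_of_forall_even {σ : Type*} {m : σ →₀ ℕ}
    (hm : ∀ i, Even (m i)) : ∃ j, m = 2 • j :=
  ⟨m.mapRange (· / 2) (Nat.zero_div 2), by
    ext i; simp [Nat.mul_div_cancel' (hm i).two_dvd]⟩

namespace MvPolynomial

variable {R σ : Type*} [CommSemiring R]

lemma forall_degreeOf_le_iff {p : MvPolynomial σ R} {D : σ →₀ ℕ} :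
    (∀ i, degreeOf i p ≤ D i) ↔ ∀ m ∈ p.support, m ≤ D := by
  simp only [degreeOf_le_iff, Finsupp.le_def]
  exact forall_comm.trans (forall_congr' fun _ => forall_comm)

lemma coeff_mul_eq_zero_of_not_le_add {p q : MvPolynomial σ R} {D E m : σ →₀ ℕ}
    (hp : ∀ x ∈ p.support, x ≤ D) (hq : ∀ y ∈ q.support, y ≤ E) (hm : ¬ m ≤ D + E) :
    coeff m (p * q) = 0 := by
  classical
  by_contra hne
  obtain ⟨x, hx, y, hy, rfl⟩ := Finset.mem_add.mp (support_mul p q (mem_support_iff.mpr hne))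
  exact hm (add_le_add (hp x hx) (hq y hy))

lemma coeff_nsmul_pow_expChar (p : ℕ) [ExpChar R p] (φ : MvPolynomial σ R) (m : σ →₀ ℕ) :
    coeff (p • m) (φ ^ p) = coeff m φ ^ p := by
  rw [← map_frobenius_expand p, coeff_map, coeff_expand_smul p (expChar_pos R p).ne',
    frobenius_def]

lemma coeff_sum_monomial_subtype {B : Finset (σ →₀ ℕ)} (a : B → R) (j : B) :
    coeff j (∑ b : B, monomial (b : σ →₀ ℕ) (a b)) = a j := by
  classical
  rw [coeff_sum, Finset.sum_eq_single j (fun b _ hb => ?_) (by simp), coeff_monomial, if_pos rfl]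
  rw [coeff_monomial, if_neg (Subtype.coe_injective.ne hb)]

theorem exists_support_subset_forall_mem_coeff_two_nsmul_eq_zero {k : Type*} [Field k]
    [IsAlgClosed k] [CharP k 2] (B : Finset (σ →₀ ℕ)) (f g : MvPolynomial σ k) :
    ∃ h : MvPolynomial σ k, h.support ⊆ B ∧
      ∀ j ∈ B, coeff (2 • j) (f + h ^ 2 + g * h) = 0 := by
  classical
  let L : Matrix B B k := fun j b =>
    if (b : σ →₀ ℕ) ≤ 2 • (j : σ →₀ ℕ) then coeff (2 • (j : σ →₀ ℕ) - (b : σ →₀ ℕ)) g else 0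
  obtain ⟨a, ha⟩ := L.exists_sq_add_mulVec_eq fun j => -coeff (2 • (j : σ →₀ ℕ)) f
  set h := ∑ b : B, monomial (b : σ →₀ ℕ) (a b)
  refine ⟨h, ?_, fun j hj => ?_⟩
  · refine support_sum.trans (Finset.biUnion_subset.mpr fun b _ => ?_)
    exact support_monomial_subset.trans (Finset.singleton_subset_iff.mpr b.2)
  have hgh : coeff (2 • j) (g * h) = (L *ᵥ a) ⟨j, hj⟩ := by
    simp only [h, Finset.mul_sum, coeff_sum, coeff_mul_monomial', mulVec, dotProduct, L, ite_mul,
      zero_mul]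
  have hhh : coeff (2 • j) (h ^ 2) = a ⟨j, hj⟩ ^ 2 := by
    rw [coeff_nsmul_pow_expChar, coeff_sum_monomial_subtype a ⟨j, hj⟩]
  rw [coeff_add, coeff_add, hgh, hhh, add_assoc, ← neg_eq_iff_add_eq_zero]
  exact (congrFun ha ⟨j, hj⟩).symm

end MvPolynomial

/-- Over an algebraically closed field of characteristic 2: if the square part of `f` is `u²`
and `degᵢ g = degᵢ u` for every variable, then there is `h` with `degᵢ h ≤ degᵢ u` such that
`f + h² + g·h` has zero square part. -/
theorem square_part_removable
    (k : Type*) [Field k] [IsAlgClosed k] [CharP k 2]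
    (n : ℕ) (f g u : MvPolynomial (Fin n) k)
    (hf : ∀ m : Fin n →₀ ℕ, (∀ i : Fin n, Even (m i)) → coeff m f = coeff m (u ^ 2))
    (hg : ∀ i : Fin n, degreeOf i g = degreeOf i u) :
    ∃ h : MvPolynomial (Fin n) k,
      (∀ i : Fin n, degreeOf i h ≤ degreeOf i u) ∧
      ∀ m : Fin n →₀ ℕ, (∀ i : Fin n, Even (m i)) →
        coeff m (f + h ^ 2 + g * h) = 0 := by
  classical
  set D : Fin n →₀ ℕ := u.degrees.toFinsupp
  have hD : ∀ i, degreeOf i u = D i := fun i => by rw [degreeOf_def, Multiset.toFinsupp_apply]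
  simp only [hD] at hg ⊢
  obtain ⟨h, hhB, hh⟩ := exists_support_subset_forall_mem_coeff_two_nsmul_eq_zero (Finset.Iic D) f g
  have hhD : ∀ m ∈ h.support, m ≤ D := fun m hm => Finset.mem_Iic.mp (hhB hm)
  refine ⟨h, forall_degreeOf_le_iff.mpr hhD, fun m hm => ?_⟩
  obtain ⟨j, rfl⟩ := Finsupp.exists_eq_two_nsmul_of_forall_even hm
  by_cases hj : j ≤ D
  · exact hh j (Finset.mem_Iic.mpr hj)
  have hjD : ¬ 2 • j ≤ D + D := fun h2 => hj <| Finsupp.le_def.mpr fun i => by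
    have := Finsupp.le_def.mp h2 i
    simp only [Finsupp.smul_apply, smul_eq_mul, Finsupp.add_apply] at this
    omega
  have huD := forall_degreeOf_le_iff.mp fun i => (hD i).le
  have hgD := forall_degreeOf_le_iff.mp fun i => (hg i).le
  rw [coeff_add, coeff_add, hf _ hm, sq, sq, coeff_mul_eq_zero_of_not_le_add huD huD hjD,
    coeff_mul_eq_zero_of_not_le_add hhD hhD hjD, coeff_mul_eq_zero_of_not_le_add hgD hhD hjD,
    add_zero, add_zero]
end

section
/- Let k be an algebraically closed field and n a natural number. Let F : (Fin n → k) → (Fin n → k) be a map each of whose components is given by evaluation of a multivariate polynomial over k (i.e. there exist polynomials P₁,…,Pₙ ∈ k[X₁,…,Xₙ] with F(v)ᵢ = Pᵢ(v) for all v). Assume F is additive: F(v + w) = F(v) + F(w) for all v, w. If the set {v : Fin n → k | F(v) = 0} is finite, then F is surjective. -/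
/-!
Induct on the size of the kernel. If `F` is injective, Ax–Grothendieck makes it surjective. In
characteristic zero a nonzero kernel element `a` would generate an infinite kernel. In
characteristic `p`, move `a` to `e₀` by a linear automorphism; then every component of `F` is a
polynomial invariant under `X₀ ↦ X₀ + 1`, hence a polynomial in `X₀ ^ p - X₀, X₁, …, Xₙ₋₁`. So
`F = F₁ ∘ G` with `G v = (v₀ ^ p - v₀, v₁, …)` additive and surjective (`k` is algebraically
closed) and `F₁` again additive and polynomial, whose kernel `G (ker F)` is strictly smaller
because `G a = G 0`.
-/

namespace Polynomial

variable {R : Type*} [CommRing R]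

lemma eval_add_one_of_comp_X_add_one_eq_self {r : R[X]} (hr : r.comp (X + 1) = r) (x : R) :
    r.eval (x + 1) = r.eval x := by
  conv_rhs => rw [← hr]
  simp [eval_comp]

lemma eq_C_eval_zero_of_comp_X_add_one_eq_self [IsDomain R] {p : ℕ} [CharP R p] {r : R[X]}
    (hr : r.comp (X + 1) = r) (hdeg : r.natDegree < p) : r = C (r.eval 0) := by
  have heval (m : ℕ) : r.eval (m : R) = r.eval 0 := by
    induction m with
    | zero => simp
    | succ m ih => rw [Nat.cast_succ, eval_add_one_of_comp_X_add_one_eq_self hr, ih]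
  refine eq_of_natDegree_lt_card_of_eval_eq r _ (f := fun i : Fin p => ((i : ℕ) : R))
    (fun i j hij => Fin.ext (CharP.natCast_injOn_Iio R p i.isLt j.isLt hij)) (by simp [heval]) ?_
  simpa using hdeg

lemma natDegree_X_pow_sub_X [Nontrivial R] {p : ℕ} (hp : 1 < p) :
    (X ^ p - X : R[X]).natDegree = p := by
  have : (X : R[X]).degree < (X ^ p : R[X]).degree := by
    rw [degree_X_pow, degree_X]
    exact_mod_cast hp
  rw [natDegree_eq_of_degree_eq (degree_sub_eq_left_of_degree_lt this), natDegree_X_pow]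

lemma monic_X_pow_sub_X [Nontrivial R] {p : ℕ} (hp : 1 < p) : (X ^ p - X : R[X]).Monic :=
  monic_X_pow_sub (by rw [degree_X]; exact_mod_cast hp)

lemma X_pow_sub_X_comp_X_add_one (p : ℕ) [Fact p.Prime] [CharP R p] :
    (X ^ p - X : R[X]).comp (X + 1) = X ^ p - X := by
  rw [sub_comp, pow_comp, X_comp, add_pow_char, one_pow]
  ring

lemma comp_X_add_one_divByMonic_modByMonic [Nontrivial R] {m : R[X]} (hm : m.Monic)
    (hmc : m.comp (X + 1) = m) (f : R[X]) :
    f.comp (X + 1) /ₘ m = (f /ₘ m).comp (X + 1) ∧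
      f.comp (X + 1) %ₘ m = (f %ₘ m).comp (X + 1) := by
  refine div_modByMonic_unique _ _ hm ⟨?_, ?_⟩
  · conv_rhs => rw [← modByMonic_add_div f m]
    rw [add_comp, mul_comp, hmc]
  · rw [← C_1, ← taylor_apply, degree_taylor]
    exact degree_modByMonic_lt f hm

/-- Division by `X ^ p - X`, itself invariant under `X ↦ X + 1`, gives an invariant quotient of
smaller degree and an invariant, hence constant, remainder. -/
lemma exists_eq_comp_X_pow_sub_X_of_comp_X_add_one_eq_self [IsDomain R] {p : ℕ} [Fact p.Prime]
    [CharP R p] {f : R[X]} (hf : f.comp (X + 1) = f) : ∃ g : R[X], f = g.comp (X ^ p - X) := by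
  have hp := (Fact.out : p.Prime).one_lt
  induction hN : f.natDegree using Nat.strong_induction_on generalizing f with
  | _ N ih =>
  by_cases hsmall : N < p
  · refine ⟨C (f.eval 0), ?_⟩
    rw [C_comp]
    exact eq_C_eval_zero_of_comp_X_add_one_eq_self hf (hN ▸ hsmall)
  have hm := monic_X_pow_sub_X (R := R) hp
  obtain ⟨hq, hr⟩ := comp_X_add_one_divByMonic_modByMonic hm (X_pow_sub_X_comp_X_add_one p) f
  rw [hf] at hq hr
  obtain ⟨g, hg⟩ := ih _
    (by rw [← hN, natDegree_divByMonic f hm, natDegree_X_pow_sub_X hp]; omega) hq.symm rfl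
  have hr_deg : (f %ₘ (X ^ p - X)).natDegree < p := by
    simpa only [natDegree_X_pow_sub_X hp] using natDegree_modByMonic_lt f hm
      (ne_of_apply_ne natDegree (by rw [natDegree_X_pow_sub_X hp, natDegree_one]; omega))
  have hr_const := eq_C_eval_zero_of_comp_X_add_one_eq_self hr.symm hr_deg
  refine ⟨X * g + C ((f %ₘ (X ^ p - X)).eval 0), ?_⟩
  conv_lhs => rw [← modByMonic_add_div f (X ^ p - X), hr_const, hg]
  simp only [add_comp, mul_comp, X_comp, C_comp]
  ring

end Polynomial

namespace MvPolynomial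

lemma eval_bind₁ {R σ τ : Type*} [CommSemiring R] (v : τ → R) (g : σ → MvPolynomial τ R)
    (P : MvPolynomial σ R) : eval v (bind₁ g P) = eval (fun i => eval v (g i)) P :=
  eval₂Hom_bind₁ _ _ _ _

lemma eval_bind₁_update_X {R σ : Type*} [CommSemiring R] [DecidableEq σ] (v : σ → R)
    (i : σ) (q P : MvPolynomial σ R) :
    eval v (bind₁ (Function.update X i q) P) = eval (Function.update v i (eval v q)) P := by
  rw [eval_bind₁, ← Function.comp_def, Function.comp_update]
  simp [Function.comp_def]

variable {R : Type*} [CommRing R] {m : ℕ}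

lemma finSuccEquiv_bind₁_update_zero (q P : MvPolynomial (Fin (m + 1)) R) :
    finSuccEquiv R m (bind₁ (Function.update X 0 q) P) =
      (finSuccEquiv R m P).comp (finSuccEquiv R m q) := by
  suffices (finSuccEquiv R m).toAlgHom.comp (bind₁ (Function.update X 0 q)) =
      ((Polynomial.aeval (finSuccEquiv R m q)).restrictScalars R).comp
        (finSuccEquiv R m).toAlgHom by
    simpa [Polynomial.comp_eq_aeval] using congr($this P)
  refine algHom_ext fun i => ?_
  cases i using Fin.cases <;> simp [finSuccEquiv_X_zero, finSuccEquiv_X_succ, Fin.succ_ne_zero]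

lemma exists_eq_bind₁_update_X_pow_sub_X [IsDomain R] {p : ℕ} [Fact p.Prime] [CharP R p]
    {P : MvPolynomial (Fin (m + 1)) R} (hP : bind₁ (Function.update X 0 (X 0 + 1)) P = P) :
    ∃ Q, P = bind₁ (Function.update X 0 (X 0 ^ p - X 0)) Q := by
  have h := congrArg (finSuccEquiv R m) hP
  rw [finSuccEquiv_bind₁_update_zero] at h
  simp only [map_add, map_one, finSuccEquiv_X_zero] at h
  obtain ⟨g, hg⟩ := Polynomial.exists_eq_comp_X_pow_sub_X_of_comp_X_add_one_eq_self h
  refine ⟨(finSuccEquiv R m).symm g, (finSuccEquiv R m).injective ?_⟩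
  rw [finSuccEquiv_bind₁_update_zero, AlgEquiv.apply_symm_apply, hg]
  simp [finSuccEquiv_X_zero]

end MvPolynomial

lemma exists_linearEquiv_apply_eq {K V : Type*} [Field K] [AddCommGroup V] [Module K V]
    {x y : V} (hx : x ≠ 0) (hy : y ≠ 0) : ∃ g : V ≃ₗ[K] V, g x = y := by
  obtain ⟨g, hg⟩ := Submodule.exists_linearEquiv_restrict_eq
    ((LinearEquiv.toSpanNonzeroSingleton K V x hx).symm ≪≫ₗ
      LinearEquiv.toSpanNonzeroSingleton K V y hy)
  have h := hg (LinearEquiv.toSpanNonzeroSingleton K V x hx 1)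
  rw [LinearEquiv.trans_apply, LinearEquiv.symm_apply_apply] at h
  exact ⟨g, by simpa using h.symm⟩

section PolynomialMap

variable {R : Type*} [CommSemiring R] {σ τ υ : Type*}

def IsPolynomialMap (F : (σ → R) → (τ → R)) : Prop :=
  ∃ P : τ → MvPolynomial σ R, ∀ v i, F v i = MvPolynomial.eval v (P i)

lemma IsPolynomialMap.comp {F : (τ → R) → (υ → R)} {G : (σ → R) → (τ → R)}
    (hF : IsPolynomialMap F) (hG : IsPolynomialMap G) : IsPolynomialMap (F ∘ G) := by
  obtain ⟨P, hP⟩ := hF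
  obtain ⟨Q, hQ⟩ := hG
  refine ⟨fun i => MvPolynomial.bind₁ Q (P i), fun v i => ?_⟩
  rw [Function.comp_apply, hP, MvPolynomial.eval_bind₁]
  exact congrArg (MvPolynomial.eval · (P i)) (funext (hQ v))

lemma LinearMap.isPolynomialMap [Fintype σ] [DecidableEq σ] (L : (σ → R) →ₗ[R] (τ → R)) :
    IsPolynomialMap L := by
  refine ⟨fun i => ∑ j, MvPolynomial.C (L (Pi.single j 1) i) * MvPolynomial.X j, fun v i => ?_⟩
  have hsingle (j : σ) : (fun l => if j = l then (1 : R) else 0) = Pi.single j 1 := by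
    ext l
    simp [Pi.single_apply, eq_comm]
  simp [L.pi_apply_eq_sum_univ v, hsingle, mul_comm]

end PolynomialMap

lemma IsAlgClosed.exists_pow_sub_self_eq {k : Type*} [Field k] [IsAlgClosed k] {p : ℕ}
    (hp : 1 < p) (c : k) : ∃ x : k, x ^ p - x = c := by
  open Polynomial in
  obtain ⟨x, hx⟩ := IsAlgClosed.exists_root (X ^ p - X - C c)
    (degree_ne_of_natDegree_ne (n := 0) (by rw [natDegree_sub_C, natDegree_X_pow_sub_X hp]; omega))
  exact ⟨x, by simpa [sub_eq_zero] using hx⟩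

section ArtinSchreier

variable (k : Type*) [CommRing k] (p : ℕ) [Fact p.Prime] [CharP k p] {ι : Type*} [DecidableEq ι]

def artinSchreierAt (i : ι) : (ι → k) →+ (ι → k) where
  toFun v := Function.update v i (v i ^ p - v i)
  map_zero' := by simp [zero_pow (Fact.out : p.Prime).ne_zero]
  map_add' v w := by
    ext j
    rcases eq_or_ne j i with rfl | hj
    · simp only [Function.update_self, Pi.add_apply, add_pow_char]
      ring
    · simp [hj]

variable {k p}

lemma artinSchreierAt_apply (i : ι) (v : ι → k) :
    artinSchreierAt k p i v = Function.update v i (v i ^ p - v i) := rfl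

lemma artinSchreierAt_single_one (i : ι) : artinSchreierAt k p i (Pi.single i 1) = 0 := by
  ext j
  rcases eq_or_ne j i with rfl | hj <;> simp [artinSchreierAt_apply, *]

end ArtinSchreier

lemma artinSchreierAt_surjective {k : Type*} [Field k] [IsAlgClosed k] {p : ℕ} [Fact p.Prime]
    [CharP k p] {ι : Type*} [DecidableEq ι] (i : ι) :
    Function.Surjective (artinSchreierAt k p i) := by
  intro w
  obtain ⟨x, hx⟩ := IsAlgClosed.exists_pow_sub_self_eq (Fact.out : p.Prime).one_lt (w i)
  exact ⟨Function.update w i x, by simp [artinSchreierAt_apply, hx]⟩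

lemma Pi.add_single_eq_update {ι M : Type*} [DecidableEq ι] [AddZeroClass M] (v : ι → M) (i : ι)
    (x : M) : v + Pi.single i x = Function.update v i (v i + x) := by
  ext j
  rcases eq_or_ne j i with rfl | hj <;> simp [*]

open MvPolynomial in
lemma IsPolynomialMap.exists_eq_comp_artinSchreierAt_zero_of_periodic {k : Type*} [Field k]
    [Infinite k] {p : ℕ} [Fact p.Prime] [CharP k p] {m : ℕ} {τ : Type*}
    {F : (Fin (m + 1) → k) → (τ → k)}
    (hF : IsPolynomialMap F) (hper : ∀ v, F (v + Pi.single 0 1) = F v) :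
    ∃ F₁ : (Fin (m + 1) → k) → (τ → k),
      IsPolynomialMap F₁ ∧ ∀ v, F v = F₁ (artinSchreierAt k p 0 v) := by
  obtain ⟨P, hP⟩ := hF
  have hPper (i : τ) : bind₁ (Function.update X 0 (X 0 + 1)) (P i) = P i := by
    refine MvPolynomial.funext fun v => ?_
    rw [eval_bind₁_update_X, ← hP, ← hP]
    simpa [Pi.add_single_eq_update] using congrFun (hper v) i
  choose Q hQ using fun i => exists_eq_bind₁_update_X_pow_sub_X (p := p) (hPper i)
  refine ⟨fun v i => eval v (Q i), ⟨Q, fun _ _ => rfl⟩, fun v => funext fun i => ?_⟩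
  rw [hP, hQ, eval_bind₁_update_X]
  simp [artinSchreierAt_apply]

lemma Function.Surjective.map_add_of_forall_apply_eq {A B C : Type*} [AddMonoid A] [AddMonoid B]
    [AddMonoid C] {F : A →+ C} {G : A →+ B} (hG : Function.Surjective G) {F₁ : B → C}
    (h : ∀ v, F v = F₁ (G v)) (x y : B) : F₁ (x + y) = F₁ x + F₁ y := by
  obtain ⟨v, rfl⟩ := hG x
  obtain ⟨w, rfl⟩ := hG y
  rw [← map_add, ← h, ← h, ← h, map_add]

lemma AddMonoidHom.exists_eq_comp_of_map_eq_zero {k : Type*} [Field k] [IsAlgClosed k] {p : ℕ}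
    [Fact p.Prime] [CharP k p] {n : ℕ} {τ : Type*} (F : (Fin n → k) →+ (τ → k))
    (hF : IsPolynomialMap F) {a : Fin n → k} (ha : a ≠ 0) (hFa : F a = 0) :
    ∃ (F₁ : (Fin n → k) →+ (τ → k)) (G : (Fin n → k) →+ (Fin n → k)),
      IsPolynomialMap F₁ ∧ Function.Surjective G ∧ G a = 0 ∧ F = F₁.comp G := by
  obtain ⟨m, rfl⟩ : ∃ m, n = m + 1 :=
    Nat.exists_eq_succ_of_ne_zero fun hn => ha (by subst hn; exact Subsingleton.elim _ _)
  obtain ⟨L, hL⟩ := exists_linearEquiv_apply_eq (K := k) (x := Pi.single 0 1) (by simp) ha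
  have hAS := artinSchreierAt_surjective (k := k) (p := p) (0 : Fin (m + 1))
  obtain ⟨F₁, hF₁, hfac⟩ := (hF.comp (L : (Fin (m + 1) → k) →ₗ[k] _).isPolynomialMap)
    |>.exists_eq_comp_artinSchreierAt_zero_of_periodic (p := p) fun v => by simp [hL, hFa]
  refine ⟨AddMonoidHom.mk' F₁ (hAS.map_add_of_forall_apply_eq (F := F.comp L.toAddMonoidHom) hfac),
    (artinSchreierAt k p 0).comp L.symm.toAddMonoidHom, hF₁, hAS.comp L.symm.surjective, ?_, ?_⟩
  · simp [← hL, artinSchreierAt_single_one]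
  · refine AddMonoidHom.ext fun v => ?_
    simpa using hfac (L.symm v)

lemma Set.ncard_image_lt_of_apply_eq {α β : Type*} {f : α → β} {s : Set α} (hs : s.Finite)
    {x y : α} (hx : x ∈ s) (hy : y ∈ s) (hxy : x ≠ y) (hf : f x = f y) :
    (f '' s).ncard < s.ncard :=
  (Set.ncard_image_le hs).lt_of_ne fun h => hxy (Set.injOn_of_ncard_image_eq h hs hx hy hf)

lemma AddMonoidHom.surjective_of_isPolynomialMap_of_finite_ker {k : Type*} [Field k]
    [IsAlgClosed k] {n : ℕ} (F : (Fin n → k) →+ (Fin n → k)) (hF : IsPolynomialMap F)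
    (hker : (F.ker : Set (Fin n → k)).Finite) : Function.Surjective F := by
  induction hN : (F.ker : Set (Fin n → k)).ncard using Nat.strong_induction_on
    generalizing F with
  | _ N ih =>
  by_cases hinj : Function.Injective F
  · obtain ⟨P, hP⟩ := hF
    have hFP : ⇑F = fun v i => MvPolynomial.eval v (P i) := funext₂ hP
    rw [hFP] at hinj ⊢
    exact ax_grothendieck_univ P hinj
  obtain ⟨a, hFa, ha⟩ : ∃ a, F a = 0 ∧ a ≠ 0 := by
    simpa [injective_iff_map_eq_zero] using hinj
  rcases CharP.exists' k with hchar | ⟨p, _, _⟩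
  · have hsmul : Function.Injective fun m : ℕ => m • a := by
      simp only [← Nat.cast_smul_eq_nsmul k]
      exact (smul_left_injective k ha).comp Nat.cast_injective
    exact absurd hker (Set.infinite_of_injective_forall_mem hsmul
      fun m => F.ker.nsmul_mem (F.mem_ker.2 hFa) m)
  obtain ⟨F₁, G, hF₁, hG, hGa, rfl⟩ := F.exists_eq_comp_of_map_eq_zero (p := p) hF ha hFa
  have hker₁ : (F₁.ker : Set (Fin n → k)) = G '' (F₁.comp G).ker := by
    rw [← AddMonoidHom.comap_ker, AddSubgroup.coe_comap, Set.image_preimage_eq _ hG]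
  refine (ih _ ?_ F₁ hF₁ (hker₁ ▸ hker.image G) rfl).comp hG
  rw [← hN, hker₁]
  exact Set.ncard_image_lt_of_apply_eq hker hFa (map_zero _) ha (hGa.trans G.map_zero.symm)

/-- A homomorphism of the vector group `𝔾ₐⁿ` over an algebraically closed field, given by
polynomial maps, with finite kernel is surjective on `k`-points. -/
theorem additive_polynomial_map_finite_kernel_surjective
    (k : Type*) [Field k] [IsAlgClosed k] (n : ℕ)
    (F : (Fin n → k) → (Fin n → k))
    (hpoly : ∃ P : Fin n → MvPolynomial (Fin n) k,
      ∀ (v : Fin n → k) (i : Fin n), F v i = MvPolynomial.eval v (P i))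
    (hadd : ∀ v w : Fin n → k, F (v + w) = F v + F w)
    (hker : {v : Fin n → k | F v = 0}.Finite) :
    Function.Surjective F :=
  (AddMonoidHom.mk' F hadd).surjective_of_isPolynomialMap_of_finite_ker hpoly hker
end

section
/- Let k be an algebraically closed field of characteristic p > 0, n a natural number, and L : (Fin n → k) →ₗ[k] (Fin n → k) a k-linear map. Then the map τ : (Fin n → k) → (Fin n → k) defined by τ(v) = (fun i => (v i)^p) + L(v) (componentwise p-th power Frobenius plus the linear map L) is surjective. -/
/-!
Write `τ(v) = (g₁(v), …, gₙ(v))` with `gᵢ = Xᵢ ^ p + ℓᵢ`, where `ℓᵢ` is the linear form of the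
`i`-th row of `L`. As `p ≥ 2` (a positive characteristic is prime) exceeds the degree of `ℓᵢ`,
every monomial can be reduced modulo the `gᵢ` to one with all exponents `< p`, so
`k[X₁, …, Xₙ]` is a finite module over `B = k[g₁, …, gₙ]`. Comparing transcendence degrees, the
`gᵢ` are algebraically independent, so `w ∈ kⁿ` gives a `k`-point `gᵢ ↦ wᵢ` of `B`. By lying
over, its maximal ideal lies under a maximal ideal of `k[X₁, …, Xₙ]`, which by the
Nullstellensatz is a point `v` with `gᵢ(v) = wᵢ`.
-/

open MvPolynomial Set

namespace MvPolynomial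

theorem totalDegree_sum_C_mul_X_le {R σ : Type*} [CommSemiring R] [Fintype σ] (c : σ → R) :
    (∑ j, C (c j) * X j).totalDegree ≤ 1 :=
  (totalDegree_finsetSum _ _).trans <| Finset.sup_le fun j _ => by
    simpa [C_mul_X_eq_monomial] using totalDegree_monomial_le (Finsupp.single j 1) (c j)

theorem finite_adjoin_range_of_totalDegree_sub_X_pow_lt {R σ : Type*} [CommRing R] [Finite σ]
    {p : ℕ} (hp : 0 < p) (g : σ → MvPolynomial σ R)
    (hg : ∀ i, (g i - X i ^ p).totalDegree < p) :
    Module.Finite (Algebra.adjoin R (range g)) (MvPolynomial σ R) := by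
  set B := Algebra.adjoin R (range g)
  set M := Submodule.span B ((monomial · (1 : R)) '' {a : σ →₀ ℕ | ∀ i, a i < p})
  have mem_of_monomial_mem (f : MvPolynomial σ R) (h : ∀ a ∈ f.support, monomial a 1 ∈ M) :
      f ∈ M := by
    have hf : f ∈ restrictSupport R f.support := (mem_restrictSupport_iff R).mpr subset_rfl
    rw [restrictSupport_eq_span] at hf
    exact (Submodule.span_le (p := M.restrictScalars R)).mpr
      (by rintro _ ⟨a, ha, rfl⟩; exact h a ha) hf
  have monomial_mem (a : σ →₀ ℕ) : monomial a 1 ∈ M := by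
    induction hd : a.degree using Nat.strong_induction_on generalizing a with
    | _ d ih =>
    by_cases hsmall : ∀ i, a i < p
    · exact Submodule.subset_span ⟨a, hsmall, rfl⟩
    obtain ⟨i, hi⟩ : ∃ i, p ≤ a i := by simpa using hsmall
    obtain ⟨a', rfl⟩ : ∃ a', a = a' + Finsupp.single i p :=
      ⟨a - Finsupp.single i p, (tsub_add_cancel_of_le (by simpa using hi)).symm⟩
    have hsplit : monomial (a' + Finsupp.single i p) (1 : R)
        = g i * monomial a' 1 - (g i - X i ^ p) * monomial a' 1 := by
      rw [monomial_add_single]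
      ring
    have hdeg : a'.degree + p = d := by simp [← hd]
    rw [hsplit]
    refine M.sub_mem (M.smul_mem ⟨g i, Algebra.subset_adjoin ⟨i, rfl⟩⟩ (ih _ (by omega) a' rfl))
      (mem_of_monomial_mem _ fun b hb => ih _ ?_ b rfl)
    calc b.degree ≤ ((g i - X i ^ p) * monomial a' 1).totalDegree := le_totalDegree hb
      _ ≤ (g i - X i ^ p).totalDegree + (monomial a' (1 : R)).totalDegree := totalDegree_mul _ _
      _ < p + a'.degree := add_lt_add_of_lt_of_le (hg i) (totalDegree_monomial_le _ _)
      _ = d := by omega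
  have hfin : {a : σ →₀ ℕ | ∀ i, a i < p}.Finite :=
    Finite.of_injective (fun a i => (⟨a.1 i, a.2 i⟩ : Fin p))
      fun a b h => Subtype.ext (Finsupp.ext fun i => congrArg Fin.val (congrFun h i))
  exact Module.finite_def.mpr (Submodule.fg_def.mpr
    ⟨_, hfin.image _, eq_top_iff.mpr fun f _ => mem_of_monomial_mem f fun a _ => monomial_mem a⟩)

theorem algebraicIndependent_of_isIntegral_adjoin_range {k σ : Type*} [CommRing k] [IsDomain k]
    [Finite σ] (g : σ → MvPolynomial σ k)
    [Algebra.IsIntegral (Algebra.adjoin k (range g)) (MvPolynomial σ k)] :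
    AlgebraicIndependent k g :=
  (Algebra.IsAlgebraic.isTranscendenceBasis_of_lift_le_trdeg_of_finite k g (by simp)).1

theorem exists_eval_eq_of_isIntegral {k σ : Type*} [Field k] [IsAlgClosed k] [Finite σ]
    (B : Subalgebra k (MvPolynomial σ k)) [Algebra.IsIntegral B (MvPolynomial σ k)]
    (χ : B →ₐ[k] k) : ∃ v : σ → k, ∀ b : B, eval v b = χ b := by
  have : (RingHom.ker χ).IsMaximal :=
    RingHom.ker_isMaximal_of_surjective χ fun c => ⟨algebraMap k B c, χ.commutes c⟩
  obtain ⟨Q, hQ, hQχ⟩ := Ideal.exists_ideal_over_maximal_of_isIntegral (RingHom.ker χ)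
    ((RingHom.injective_iff_ker_eq_bot (algebraMap B _)).mp Subtype.val_injective ▸ bot_le)
  obtain ⟨v, rfl⟩ := isMaximal_iff_eq_vanishingIdeal_singleton.mp hQ
  refine ⟨v, fun b => ?_⟩
  have hb : b - algebraMap k B (χ b) ∈ RingHom.ker χ := by simp
  rw [← hQχ, Ideal.mem_comap, mem_vanishingIdeal_singleton_iff] at hb
  simpa [sub_eq_zero] using hb

end MvPolynomial

/-- Over an algebraically closed field of characteristic `p > 0`, the sum of the componentwise
Frobenius map and a linear map is surjective. -/
theorem frobenius_add_linear_surjective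
    (k : Type*) [Field k] [IsAlgClosed k] (p : ℕ) [CharP k p] (hp : 0 < p)
    (n : ℕ) (L : (Fin n → k) →ₗ[k] (Fin n → k)) :
    Function.Surjective (fun v : Fin n → k => (fun i => (v i) ^ p) + L v) := by
  have hp2 : 2 ≤ p := by have := CharP.char_ne_one k p; omega
  intro w
  let g : Fin n → MvPolynomial (Fin n) k :=
    fun i => X i ^ p + ∑ j, C (L (Pi.single j 1) i) * X j
  have : Module.Finite (Algebra.adjoin k (range g)) (MvPolynomial (Fin n) k) :=
    finite_adjoin_range_of_totalDegree_sub_X_pow_lt hp g fun i => by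
      simpa [g] using (totalDegree_sum_C_mul_X_le _).trans_lt hp2
  have hg : AlgebraicIndependent k g := algebraicIndependent_of_isIntegral_adjoin_range g
  obtain ⟨v, hv⟩ :=
    exists_eval_eq_of_isIntegral _ ((aeval w).comp hg.aevalEquiv.symm.toAlgHom)
  refine ⟨v, funext fun i => ?_⟩
  have hL : L v i = ∑ j, L (Pi.single j 1) i * v j := by
    conv_lhs => rw [pi_eq_sum_univ' v]
    simp [mul_comm]
  simpa [g, hL] using hv (hg.aevalEquiv (X i))
end

section
/- Let k be a field of characteristic p > 0, n a natural number, and L : (Fin n → k) →ₗ[k] (Fin n → k) a k-linear map. Then the set {v : Fin n → k | for every i, (v i)^p + (L v) i = 0} is finite. -/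
/-!
The kernel `S` of `τ = F + L` (`F` the componentwise Frobenius) is spanned over `k` by a linearly
independent family `b ⊆ S`. For `v = ∑ c j • b j ∈ S` we get
`∑ (c j)^p • F (b j) = F v = -L v = ∑ c j • F (b j)`. The family `F ∘ b` is again linearly
independent: over an algebraic closure `F` becomes semilinear with respect to a bijection, and
linear independence in `k^ι` survives field extension. Hence `(c j)^p = c j`, so each coordinate
is a root of `X^p - X`, leaving finitely many `v`.
-/

section

variable {k : Type*} [Field k] {p : ℕ}

open Polynomial in
theorem finite_setOf_pow_eq_self (hp : 1 < p) : {x : k | x ^ p = x}.Finite :=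
  (finite_setOfPred_isRoot (FiniteField.X_pow_card_sub_X_ne_zero k hp)).subset fun x hx => by
    simp [IsRoot, hx.out]

variable [ExpChar k p]

theorem RingHom.compLeft_frobenius_smul {ι : Type*} (c : k) (v : ι → k) :
    (frobenius k p).compLeft ι (c • v) = c ^ p • (frobenius k p).compLeft ι v := by
  ext; simp [frobenius_def, mul_pow]

theorem LinearIndependent.frobenius_compLeft {ι ι' : Type*} [Finite ι'] {v : ι → ι' → k}
    (hv : LinearIndependent k v) :
    LinearIndependent k (fun i => (frobenius k p).compLeft ι' (v i)) := by
  let K := AlgebraicClosure k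
  have : ExpChar K p := expChar_of_injective_algebraMap (algebraMap k K).injective p
  rw [← linearIndependent_algebraMap_comp_iff (S := K)] at hv ⊢
  have hcomm : (fun i => algebraMap k K ∘ (frobenius k p).compLeft ι' (v i)) =
      (frobenius K p).compLeft ι' ∘ fun i => algebraMap k K ∘ v i := by
    ext; simp [frobenius_def]
  rw [hcomm]
  exact hv.map_of_surjective_injectiveₛ (frobenius K p)
    ((frobenius K p).compLeft ι').toAddMonoidHom (surjective_frobenius K p)
    (fun v w h => funext fun i => frobenius_inj K p (congrFun h i))
    RingHom.compLeft_frobenius_smul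

variable {ι : Type*} (L : (ι → k) →ₗ[k] (ι → k))

variable (p) in
-- The endomorphism `τ` of the paper.
def frobeniusAddLinear : (ι → k) →+ (ι → k) :=
  ((frobenius k p).compLeft ι).toAddMonoidHom + L.toAddMonoidHom

theorem mem_ker_frobeniusAddLinear {v : ι → k} :
    v ∈ (frobeniusAddLinear p L).ker ↔ (frobenius k p).compLeft ι v = -L v :=
  eq_neg_iff_add_eq_zero.symm

theorem pow_eq_self_of_sum_smul_mem_ker_frobeniusAddLinear {κ : Type*} [Fintype κ] [Finite ι]
    {b : κ → ι → k} (hb : LinearIndependent k b)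
    (hbτ : ∀ j, b j ∈ (frobeniusAddLinear p L).ker)
    {c : κ → k} (hc : ∑ j, c j • b j ∈ (frobeniusAddLinear p L).ker) (j : κ) :
    c j ^ p = c j := by
  set F := (frobenius k p).compLeft ι
  have hFp : F (∑ j, c j • b j) = ∑ j, c j ^ p • F (b j) := by
    simp only [map_sum, RingHom.compLeft_frobenius_smul, F]
  have hFb : ∀ j, F (b j) = -L (b j) := fun j => (mem_ker_frobeniusAddLinear L).mp (hbτ j)
  have hL : F (∑ j, c j • b j) = ∑ j, c j • F (b j) := calc
    F (∑ j, c j • b j) = -L (∑ j, c j • b j) := (mem_ker_frobeniusAddLinear L).mp hc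
    _ = ∑ j, c j • -L (b j) := by
      simp only [map_sum, map_smul, smul_neg, Finset.sum_neg_distrib]
    _ = ∑ j, c j • F (b j) := by simp only [hFb]
  have hFb_linIndep := Fintype.linearIndependent_iff.mp (hb.frobenius_compLeft (p := p))
  refine sub_eq_zero.mp (hFb_linIndep (fun j => c j ^ p - c j) ?_ j)
  simp only [sub_smul, Finset.sum_sub_distrib]
  rw [← hFp, ← hL, sub_self]

theorem finite_ker_frobeniusAddLinear [Finite ι] (hp : 1 < p) :
    ((frobeniusAddLinear p L).ker : Set (ι → k)).Finite := by
  obtain ⟨b, hbτ, hbspan, hb⟩ :=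
    exists_linearIndependent k ((frobeniusAddLinear p L).ker : Set (ι → k))
  have : Fintype b := hb.setFinite.fintype
  refine ((Set.Finite.pi fun _ : b => finite_setOf_pow_eq_self hp).image
    fun c : b → k => ∑ j, c j • (j : ι → k)).subset fun v hv => ?_
  have hv' : v ∈ Submodule.span k (Set.range ((↑) : b → ι → k)) := by
    rw [Subtype.range_coe, hbspan]
    exact Submodule.subset_span hv
  obtain ⟨c, rfl⟩ := (Submodule.mem_span_range_iff_exists_fun k).mp hv'
  exact ⟨c, fun j _ =>
    pow_eq_self_of_sum_smul_mem_ker_frobeniusAddLinear L hb (fun j => hbτ j.2) hv j, rfl⟩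

end

/-- Over a field of characteristic `p > 0`, the kernel of the sum of the componentwise
Frobenius map and a linear map is finite. -/
theorem frobenius_add_linear_finite_kernel
    (k : Type*) [Field k] (p : ℕ) [CharP k p] (hp : 0 < p)
    (n : ℕ) (L : (Fin n → k) →ₗ[k] (Fin n → k)) :
    {v : Fin n → k | ∀ i : Fin n, (v i) ^ p + L v i = 0}.Finite := by
  have : NeZero p := ⟨hp.ne'⟩
  have hprime := CharP.char_is_prime_of_pos k p
  convert finite_ker_frobeniusAddLinear L hprime.out.one_lt using 1
  ext v
  simp [frobeniusAddLinear, funext_iff, frobenius_def]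
end

section
/- Let k be a field of characteristic 2 and let a ∈ k with a ≠ 0. Let F = z² + x³ + x⁷ + a·x⁵·t + x·t⁴ as a polynomial in k[x,t,z]. Then the set of points (x₀,t₀,z₀) ∈ k³ at which F and all three formal partial derivatives ∂F/∂x, ∂F/∂t, ∂F/∂z vanish is exactly the singleton {(0,0,0)}. -/
open MvPolynomial

/-- The ℤ/2-type (Ẽ₈ + R) Enriques equation in the chart y = 1, s = 1: the surface
`z² + x³ + x⁷ + a·x⁵·t + x·t⁴ = 0` (variables `X 0 = x`, `X 1 = t`, `X 2 = z`) has exactly one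
singular point, at the origin. -/
theorem singular_locus_Z2_E8_chart_y
    (k : Type*) [Field k] [CharP k 2] (a : k) (ha : a ≠ 0)
    (F : MvPolynomial (Fin 3) k)
    (hF : F = X 2 ^ 2 + X 0 ^ 3 + X 0 ^ 7 + C a * X 0 ^ 5 * X 1 + X 0 * X 1 ^ 4) :
    {v : Fin 3 → k | eval v F = 0 ∧ eval v (pderiv 0 F) = 0 ∧
      eval v (pderiv 1 F) = 0 ∧ eval v (pderiv 2 F) = 0} = {0} := by
  have h2 : (2 : k) = 0 := by exact_mod_cast CharP.cast_eq_zero k 2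
  have h4 : (4 : k) = 0 := by
    have : (4 : k) = 2 * 2 := by norm_num
    rw [this, h2]; ring
  ext v
  simp only [Set.mem_setOf_eq, Set.mem_singleton_iff, hF]
  simp [Pi.single_apply, Derivation.leibniz, Derivation.leibniz_pow]
  constructor
  · rintro ⟨h0, hx, ht, hz⟩
    rw [h4] at ht
    have hx0 : v 0 = 0 := by
      have : a * v 0 ^ 5 = 0 := by linear_combination ht
      rcases mul_eq_zero.mp this with h | h
      · exact absurd h ha
      · exact pow_eq_zero_iff (by norm_num) |>.mp h
    have ht0 : v 1 = 0 := by
      have : v 1 ^ 4 = 0 := by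
        rw [hx0] at hx
        linear_combination hx
      exact pow_eq_zero_iff (by norm_num) |>.mp this
    have hz0 : v 2 = 0 := by
      have : v 2 ^ 2 = 0 := by rw [hx0, ht0] at h0; linear_combination h0
      exact pow_eq_zero_iff (by norm_num) |>.mp this
    funext i
    fin_cases i <;> simpa
  · rintro rfl
    simp [h2, h4]
end

section
/- Let k be a field of characteristic 2 and let a ∈ k with a ≠ 0. Let F = z² + y⁷ + y³ + a·y³·t + y·t⁴ as a polynomial in k[y,t,z]. Then the set of points (y₀,t₀,z₀) ∈ k³ at which F and all three formal partial derivatives ∂F/∂y, ∂F/∂t, ∂F/∂z vanish is exactly the singleton {(0,0,0)}. -/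
open MvPolynomial

/-- The ℤ/2-type (Ẽ₈ + R) Enriques equation in the chart x = 1, s = 1: the surface
`z² + y⁷ + y³ + a·y³·t + y·t⁴ = 0` (variables `X 0 = y`, `X 1 = t`, `X 2 = z`) has exactly one
singular point, at the origin. -/
theorem singular_locus_Z2_E8_chart_x
    (k : Type*) [Field k] [CharP k 2] (a : k) (ha : a ≠ 0)
    (F : MvPolynomial (Fin 3) k)
    (hF : F = X 2 ^ 2 + X 0 ^ 7 + X 0 ^ 3 + C a * X 0 ^ 3 * X 1 + X 0 * X 1 ^ 4) :
    {v : Fin 3 → k | eval v F = 0 ∧ eval v (pderiv 0 F) = 0 ∧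
      eval v (pderiv 1 F) = 0 ∧ eval v (pderiv 2 F) = 0} = {0} := by
  have h2 : (2 : k) = 0 := by exact_mod_cast CharP.cast_eq_zero k 2
  have h2P : (2 : MvPolynomial (Fin 3) k) = 0 := by
    have := CharP.cast_eq_zero (MvPolynomial (Fin 3) k) 2
    simpa using this
  have h4P : (4 : MvPolynomial (Fin 3) k) = 0 := by
    have : (4 : MvPolynomial (Fin 3) k) = 2 * 2 := by norm_num
    rw [this, h2P, mul_zero]
  have h3P : (3 : MvPolynomial (Fin 3) k) = 1 := by
    have : (3 : MvPolynomial (Fin 3) k) = 2 + 1 := by norm_num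
    rw [this, h2P, zero_add]
  have h7P : (7 : MvPolynomial (Fin 3) k) = 1 := by
    have : (7 : MvPolynomial (Fin 3) k) = 2 * 3 + 1 := by norm_num
    rw [this, h2P, zero_mul, zero_add]
  have hd0 : pderiv 0 F = X 0 ^ 6 + X 0 ^ 2 + C a * X 0 ^ 2 * X 1 + X 1 ^ 4 := by
    rw [hF]; simp [Pi.single_apply]; ring_nf; rw [h7P, h3P]; ring
  have hd1 : pderiv 1 F = C a * X 0 ^ 3 := by
    rw [hF]; simp [Pi.single_apply]; ring_nf; rw [h4P]
  have hd2 : pderiv 2 F = 0 := by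
    rw [hF]; simp [Pi.single_apply]; ring_nf; rw [h2P]
  ext v
  simp only [Set.mem_setOf_eq, Set.mem_singleton_iff, hd0, hd1, hd2]
  simp only [hF, map_add, map_mul, map_pow, eval_X, eval_C, map_zero]
  constructor
  · rintro ⟨h0, h1, hA, _⟩
    have hy : v 0 = 0 := by
      rcases mul_eq_zero.mp hA with h | h
      · exact absurd h ha
      · exact pow_eq_zero_iff (by norm_num) |>.mp h
    rw [hy] at h1 h0
    have ht : v 1 = 0 := by
      have : (v 1) ^ 4 = 0 := by
        have := h1; ring_nf at this ⊢; simpa using this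
      exact pow_eq_zero_iff (by norm_num) |>.mp this
    rw [ht] at h0
    have hz : v 2 = 0 := by
      have : (v 2) ^ 2 = 0 := by
        have := h0; ring_nf at this ⊢; simpa using this
      exact pow_eq_zero_iff (by norm_num) |>.mp this
    funext i
    fin_cases i <;> simp [hy, ht, hz]
  · rintro rfl
    simp
end

section
/- Let k be a field of characteristic 2 and let a, b ∈ k with b ≠ 0. Let F = z² + b·x³·z + x³ + x⁷ + a·x⁵·t + x·t⁴ as a polynomial in k[x,t,z]. Then the set of points (x₀,t₀,z₀) ∈ k³ at which F and all three formal partial derivatives ∂F/∂x, ∂F/∂t, ∂F/∂z vanish is exactly the singleton {(0,0,0)}. -/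
open MvPolynomial

/-- The ℤ/2-type (Ẽ₇ + R) Enriques equation in the chart y = 1, s = 1: the surface
`z² + b·x³·z + x³ + x⁷ + a·x⁵·t + x·t⁴ = 0` (variables `X 0 = x`, `X 1 = t`, `X 2 = z`)
has exactly one singular point, at the origin. -/
theorem singular_locus_Z2_E7_chart_y
    (k : Type*) [Field k] [CharP k 2] (a b : k) (hb : b ≠ 0)
    (F : MvPolynomial (Fin 3) k)
    (hF : F = X 2 ^ 2 + C b * X 0 ^ 3 * X 2 + X 0 ^ 3 + X 0 ^ 7 +
      C a * X 0 ^ 5 * X 1 + X 0 * X 1 ^ 4) :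
    {v : Fin 3 → k | eval v F = 0 ∧ eval v (pderiv 0 F) = 0 ∧
      eval v (pderiv 1 F) = 0 ∧ eval v (pderiv 2 F) = 0} = {0} := by
  subst hF
  have h2 : (2 : k) = 0 := by exact_mod_cast CharP.cast_eq_zero k 2
  have h3 : (3 : k) = 1 := by linear_combination h2
  have h4 : (4 : k) = 0 := by linear_combination 2 * h2
  have h5 : (5 : k) = 1 := by linear_combination 2 * h2
  have h7 : (7 : k) = 1 := by linear_combination 3 * h2
  ext v
  simp only [Set.mem_setOf_eq, Set.mem_singleton_iff, map_add, map_mul, map_pow,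
    pderiv_mul, pderiv_pow, pderiv_X, pderiv_C, eval_add, eval_mul, eval_pow, eval_X, eval_C,
    map_natCast, map_zero, map_one, Pi.single_apply]
  norm_num [Fin.ext_iff, h2, h3, h4, h5, h7]
  constructor
  · rintro ⟨e1, e2, e3, e4⟩
    have hx : v 0 = 0 := by
      have e4' : b * v 0 ^ 3 = 0 := by linear_combination e4 - v 2 * h2
      rcases mul_eq_zero.mp e4' with h | h
      · exact absurd h hb
      · exact pow_eq_zero_iff (by norm_num) |>.mp h
    rw [hx] at e1 e2
    have ht : v 1 = 0 :=
      pow_eq_zero_iff (n := 4) (by norm_num) |>.mp (by linear_combination e2)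
    rw [ht] at e1
    have hz : v 2 = 0 :=
      pow_eq_zero_iff (n := 2) (by norm_num) |>.mp (by linear_combination e1)
    funext i
    fin_cases i <;> simpa
  · rintro rfl
    norm_num
end

section
/- Let k be a field of characteristic 2 and let a ∈ k with a ≠ 0. Let F = z² + x³ + a·x⁸·t + x·t⁴ as a polynomial in k[x,t,z]. Then the set of points (x₀,t₀,z₀) ∈ k³ at which F and all three formal partial derivatives ∂F/∂x, ∂F/∂t, ∂F/∂z vanish is exactly the singleton {(0,0,0)}. -/
open MvPolynomial

/-- The α₂-type (Ẽ₈ + R) Enriques equation in the chart y = 1, s = 1: the surface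
`z² + x³ + a·x⁸·t + x·t⁴ = 0` (variables `X 0 = x`, `X 1 = t`, `X 2 = z`) has exactly one
singular point, at the origin. -/
theorem singular_locus_alpha2_E8_chart_y
    (k : Type*) [Field k] [CharP k 2] (a : k) (ha : a ≠ 0)
    (F : MvPolynomial (Fin 3) k)
    (hF : F = X 2 ^ 2 + X 0 ^ 3 + C a * X 0 ^ 8 * X 1 + X 0 * X 1 ^ 4) :
    {v : Fin 3 → k | eval v F = 0 ∧ eval v (pderiv 0 F) = 0 ∧
      eval v (pderiv 1 F) = 0 ∧ eval v (pderiv 2 F) = 0} = {0} := by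
  have c2 : (2 : k) = 0 := CharTwo.two_eq_zero
  have c3 : (3 : k) = 1 := by
    have : (3 : k) = 2 + 1 := by norm_num
    rw [this, c2, zero_add]
  have c4 : (4 : k) = 0 := by
    have : (4 : k) = 2 * 2 := by norm_num
    rw [this, c2, zero_mul]
  have c8 : (8 : k) = 0 := by
    have : (8 : k) = 2 * 4 := by norm_num
    rw [this, c2, zero_mul]
  ext v
  subst hF
  simp only [Set.mem_setOf_eq, Set.mem_singleton_iff, map_add, map_mul, map_pow,
    eval_X, eval_C, Derivation.leibniz, Derivation.leibniz_pow, pderiv_X, pderiv_C,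
    Pi.single_eq_same, Pi.single_eq_of_ne (by decide : (2:Fin 3) ≠ 0),
    Pi.single_eq_of_ne (by decide : (0:Fin 3) ≠ 1),
    Pi.single_eq_of_ne (by decide : (1:Fin 3) ≠ 0),
    Pi.single_eq_of_ne (by decide : (2:Fin 3) ≠ 1),
    Pi.single_eq_of_ne (by decide : (0:Fin 3) ≠ 2),
    Pi.single_eq_of_ne (by decide : (1:Fin 3) ≠ 2),
    smul_eq_mul, map_nsmul, map_one, map_zero, map_ofNat, nsmul_eq_mul, Nat.cast_ofNat,
    mul_zero, mul_one, smul_zero, zero_add, add_zero, c2, c3, c4, c8, zero_mul,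
    one_mul]
  constructor
  · rintro ⟨h0, h1, h2', _⟩
    -- h1 : v 0 ^ 2 + v 1 ^ 4 = 0, h2' : a * v 0 ^ 8 = 0
    have hx : v 0 = 0 := by
      have : v 0 ^ 8 = 0 := by
        rcases mul_eq_zero.mp h2' with h | h
        · exact absurd h ha
        · exact h
      exact pow_eq_zero_iff (by norm_num) |>.mp this
    have ht : v 1 = 0 := by
      have : v 1 ^ 4 = 0 := by rw [hx] at h1; simpa using h1
      exact pow_eq_zero_iff (by norm_num) |>.mp this
    have hz : v 2 = 0 := by
      have : v 2 ^ 2 = 0 := by rw [hx, ht] at h0; simpa using h0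
      exact pow_eq_zero_iff (by norm_num) |>.mp this
    funext i
    fin_cases i <;> simpa
  · rintro rfl
    simp
end

section
/- Let k be a field of characteristic 2 and let a, b ∈ k with b ≠ 0. Let F = z² + b·x⁵·z + x³ + a·x⁸·t + x·t⁴ as a polynomial in k[x,t,z]. Then the set of points (x₀,t₀,z₀) ∈ k³ at which F and all three formal partial derivatives ∂F/∂x, ∂F/∂t, ∂F/∂z vanish is exactly the singleton {(0,0,0)}. -/
open MvPolynomial

/-- The α₂-type (Ẽ₇ + R) Enriques equation in the chart y = 1, s = 1: the surface
`z² + b·x⁵·z + x³ + a·x⁸·t + x·t⁴ = 0` (variables `X 0 = x`, `X 1 = t`, `X 2 = z`) has exactly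
one singular point, at the origin. -/
theorem singular_locus_alpha2_E7_chart_y
    (k : Type*) [Field k] [CharP k 2] (a b : k) (hb : b ≠ 0)
    (F : MvPolynomial (Fin 3) k)
    (hF : F = X 2 ^ 2 + C b * X 0 ^ 5 * X 2 + X 0 ^ 3 + C a * X 0 ^ 8 * X 1 +
      X 0 * X 1 ^ 4) :
    {v : Fin 3 → k | eval v F = 0 ∧ eval v (pderiv 0 F) = 0 ∧
      eval v (pderiv 1 F) = 0 ∧ eval v (pderiv 2 F) = 0} = {0} := by
  subst hF
  have h2 : (2:k) = 0 := by exact_mod_cast CharP.cast_eq_zero k 2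
  have h4 : (4:k) = 0 := by rw [show (4:k) = 2*2 by norm_num, h2]; ring
  have h8 : (8:k) = 0 := by rw [show (8:k) = 2*4 by norm_num, h4]; ring
  have h5 : (5:k) = 1 := by rw [show (5:k) = 4+1 by norm_num, h4]; ring
  have h3 : (3:k) = 1 := by rw [show (3:k) = 2+1 by norm_num, h2]; ring
  ext v
  simp only [Set.mem_setOf_eq, Set.mem_singleton_iff, map_add, map_mul, map_pow, eval_X, eval_C,
    Derivation.leibniz, Derivation.leibniz_pow, pderiv_X, pderiv_C, Pi.single_apply,
    smul_eq_mul, map_zero, map_one, map_ofNat, map_nsmul, nsmul_eq_mul, Fin.isValue,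
    map_natCast, Nat.cast_ofNat, if_true, reduceIte, Fin.reduceEq, ite_false, Nat.reduceSub, h2, h3, h4, h5, h8,
    zero_mul, mul_zero, one_mul, mul_one, add_zero, zero_add]
  constructor
  · rintro ⟨hFv, hx, ht, hz⟩
    have hx0 : v 0 = 0 := by
      have := mul_eq_zero.mp hz
      rcases this with h | h
      · exact absurd h hb
      · exact pow_eq_zero_iff (by norm_num) |>.mp h
    rw [hx0] at hx hFv
    simp only [zero_pow, ne_eq, OfNat.ofNat_ne_zero, not_false_eq_true, mul_zero, zero_mul,
      zero_add, add_zero] at hx hFv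
    have hx1 : v 1 = 0 := pow_eq_zero_iff (by norm_num) |>.mp hx
    have hx2 : v 2 = 0 := pow_eq_zero_iff (by norm_num) |>.mp hFv
    funext i
    fin_cases i <;> simpa
  · rintro rfl
    simp [h2]
end

section
/- Let k be a field of characteristic 2 and let a, b, v ∈ k with v ≠ 0. Let F = z² + (b·x³ + v²·x²·t)·z + x³ + x⁷ + v³·x⁴·t + a·x⁵·t + v²·x³·t² + x·t⁴ as a polynomial in k[x,t,z]. Then the set of points (x₀,t₀,z₀) ∈ k³ at which F and all three formal partial derivatives ∂F/∂x, ∂F/∂t, ∂F/∂z vanish is a finite set, and it contains (0,0,0). -/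
open MvPolynomial


theorem origin_mem_singular_locus_aux (k : Type*) [Field k] (a b v : k) :
    let F : MvPolynomial (Fin 3) k := X 2 ^ 2 + (C b * X 0 ^ 3 + C (v ^ 2) * X 0 ^ 2 * X 1) * X 2 +
      X 0 ^ 3 + X 0 ^ 7 + C (v ^ 3) * X 0 ^ 4 * X 1 + C a * X 0 ^ 5 * X 1 +
      C (v ^ 2) * X 0 ^ 3 * X 1 ^ 2 + X 0 * X 1 ^ 4
    (0 : Fin 3 → k) ∈ {w : Fin 3 → k | eval w F = 0 ∧ eval w (pderiv 0 F) = 0 ∧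
        eval w (pderiv 1 F) = 0 ∧ eval w (pderiv 2 F) = 0} := by
  refine ⟨?_, ?_, ?_, ?_⟩ <;>
  · simp only [map_add, map_mul, map_pow, pderiv_mul, pderiv_pow, pderiv_C, pderiv_X_self,
      pderiv_X_of_ne (by decide : (2:Fin 3) ≠ 0), pderiv_X_of_ne (by decide : (1:Fin 3) ≠ 0),
      pderiv_X_of_ne (by decide : (0:Fin 3) ≠ 1), pderiv_X_of_ne (by decide : (2:Fin 3) ≠ 1),
      pderiv_X_of_ne (by decide : (0:Fin 3) ≠ 2), pderiv_X_of_ne (by decide : (1:Fin 3) ≠ 2),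
      eval_add, eval_mul, eval_pow, eval_C, eval_X, map_zero, map_one, map_ofNat,
      Nat.cast_ofNat, map_natCast, Pi.zero_apply]
    ring

/-- The ℤ/2-type (Ẽ₆ + R) Enriques equation in the chart y = 1, s = 1 (variables `X 0 = x`,
`X 1 = t`, `X 2 = z`): the singular locus is finite and contains the origin. -/
theorem singular_locus_Z2_E6_chart_y
    (k : Type*) [Field k] [CharP k 2] (a b v : k) (hv : v ≠ 0)
    (F : MvPolynomial (Fin 3) k)
    (hF : F = X 2 ^ 2 + (C b * X 0 ^ 3 + C (v ^ 2) * X 0 ^ 2 * X 1) * X 2 +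
      X 0 ^ 3 + X 0 ^ 7 + C (v ^ 3) * X 0 ^ 4 * X 1 + C a * X 0 ^ 5 * X 1 +
      C (v ^ 2) * X 0 ^ 3 * X 1 ^ 2 + X 0 * X 1 ^ 4) :
    {w : Fin 3 → k | eval w F = 0 ∧ eval w (pderiv 0 F) = 0 ∧
        eval w (pderiv 1 F) = 0 ∧ eval w (pderiv 2 F) = 0}.Finite ∧
      (0 : Fin 3 → k) ∈ {w : Fin 3 → k | eval w F = 0 ∧ eval w (pderiv 0 F) = 0 ∧
        eval w (pderiv 1 F) = 0 ∧ eval w (pderiv 2 F) = 0} := by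
  have htwo : (2:k) = 0 := by exact_mod_cast CharP.cast_eq_zero k 2
  subst hF
  constructor
  · -- finiteness
    set q : Polynomial k := Polynomial.C (v^8) * Polynomial.X ^ 4 +
      Polynomial.C (b*v^9 + b^2*v^6 + b^4) * Polynomial.X ^ 2 + Polynomial.C (v^8) with hq_def
    have hq : q ≠ 0 := by
      intro h
      have h0 := congrArg (Polynomial.eval 0) h
      simp [hq_def] at h0
      exact hv h0
    have hfin : {x : k | v^8*x^4 + (b*v^9 + b^2*v^6 + b^4)*x^2 + v^8 = 0}.Finite := by
      refine (Polynomial.finite_setOf_isRoot hq).subset fun x hx => ?_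
      simp only [Set.mem_setOf_eq] at hx ⊢
      simp only [Polynomial.IsRoot, hq_def, Polynomial.eval_add, Polynomial.eval_mul,
        Polynomial.eval_pow, Polynomial.eval_C, Polynomial.eval_X]
      linear_combination hx
    refine Set.Finite.subset ((hfin.image
      (fun x => ![x, b*x/v^2, (v^3*x^2 + a*x^3)/v^2])).insert 0) ?_
    intro w hw
    obtain ⟨h0, h1, h2, h3⟩ := hw
    simp only [map_add, map_mul, map_pow, pderiv_mul, pderiv_pow, pderiv_C, pderiv_X_self,
      pderiv_X_of_ne (by decide : (2:Fin 3) ≠ 0), pderiv_X_of_ne (by decide : (1:Fin 3) ≠ 0),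
      pderiv_X_of_ne (by decide : (0:Fin 3) ≠ 1), pderiv_X_of_ne (by decide : (2:Fin 3) ≠ 1),
      pderiv_X_of_ne (by decide : (0:Fin 3) ≠ 2), pderiv_X_of_ne (by decide : (1:Fin 3) ≠ 2),
      eval_add, eval_mul, eval_pow, eval_C, eval_X, map_zero, map_one, map_ofNat,
      Nat.cast_ofNat, map_natCast] at h0 h1 h2 h3
    norm_num at h1 h2 h3
    have e3 : b * w 0 ^ 3 + v ^ 2 * w 0 ^ 2 * w 1 = 0 := by
      linear_combination h3 - w 2 * htwo
    have e2 : v ^ 2 * w 0 ^ 2 * w 2 + v ^ 3 * w 0 ^ 4 + a * w 0 ^ 5 = 0 := by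
      linear_combination h2 - (v^2*w 0^3*w 1 + 2*w 0*w 1^3)*htwo
    have e1 : b * w 0 ^ 2 * w 2 + w 0 ^ 2 + w 0 ^ 6 + a * w 0 ^ 4 * w 1
        + v ^ 2 * w 0 ^ 2 * w 1 ^ 2 + w 1 ^ 4 = 0 := by
      linear_combination h1 - (b*w 0^2*w 2 + v^2*w 0*w 1*w 2 + w 0^2 + 3*w 0^6
        + 2*v^3*w 0^3*w 1 + 2*a*w 0^4*w 1 + v^2*w 0^2*w 1^2)*htwo
    by_cases hx : w 0 = 0
    · refine Set.mem_insert_iff.2 (Or.inl ?_)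
      rw [hx] at e1 h0
      have ht : w 1 = 0 := by
        have h4 : w 1 ^ 4 = 0 := by linear_combination e1
        exact (pow_eq_zero_iff (by norm_num)).1 h4
      have hz : w 2 = 0 := by
        rw [ht] at h0
        have h4 : w 2 ^ 2 = 0 := by linear_combination h0
        exact (pow_eq_zero_iff (by norm_num)).1 h4
      funext i
      fin_cases i <;> simp [hx, ht, hz]
    · refine Set.mem_insert_iff.2 (Or.inr ?_)
      have hx2 : w 0 ^ 2 ≠ 0 := pow_ne_zero 2 hx
      have et : v ^ 2 * w 1 = b * w 0 := by
        refine mul_left_cancel₀ hx2 ?_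
        linear_combination e3 - b*w 0^3*htwo
      have ez : v ^ 2 * w 2 = v ^ 3 * w 0 ^ 2 + a * w 0 ^ 3 := by
        refine mul_left_cancel₀ hx2 ?_
        linear_combination e2 - (v^3*w 0^4 + a*w 0^5)*htwo
      refine ⟨w 0, ?_, ?_⟩
      · show v^8*w 0^4 + (b*v^9 + b^2*v^6 + b^4)*w 0^2 + v^8 = 0
        refine mul_left_cancel₀ hx2 ?_
        linear_combination v^8*e1 - (b*v^6*w 0^2)*ez - (a*v^6*w 0^4
          + v^6*w 0^2*(v^2*w 1 + b*w 0)
          + (v^2*w 1 + b*w 0)*((v^2*w 1)^2 + (b*w 0)^2))*et - a*b*v^6*w 0^5*htwo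
      · funext i
        fin_cases i
        · rfl
        · show b * w 0 / v ^ 2 = w 1
          rw [div_eq_iff (pow_ne_zero 2 hv)]
          linear_combination -et
        · show (v ^ 3 * w 0 ^ 2 + a * w 0 ^ 3) / v ^ 2 = w 2
          rw [div_eq_iff (pow_ne_zero 2 hv)]
          linear_combination -ez
  · -- origin is singular
    exact origin_mem_singular_locus_aux k a b v
end

section
/- Let k be a field of characteristic 2 and let a, b, w ∈ k with w ≠ 0. Let F = z² + (w·x⁴ + b·x⁵)·z + x³ + w·x⁵·t + a·x⁸·t + w·x⁴·t³ + x·t⁴ as a polynomial in k[x,t,z]. Then the set of points (x₀,t₀,z₀) ∈ k³ at which F and all three formal partial derivatives ∂F/∂x, ∂F/∂t, ∂F/∂z vanish is a finite set, and it contains (0,0,0). -/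
open MvPolynomial

set_option maxHeartbeats 1000000 in
/-- The α₂-type (Ẽ₆ + R) Enriques equation in the chart y = 1, s = 1 (variables `X 0 = x`,
`X 1 = t`, `X 2 = z`): the singular locus is finite and contains the origin. -/
theorem singular_locus_alpha2_E6_chart_y
    (k : Type*) [Field k] [CharP k 2] (a b w : k) (hw : w ≠ 0)
    (F : MvPolynomial (Fin 3) k)
    (hF : F = X 2 ^ 2 + (C w * X 0 ^ 4 + C b * X 0 ^ 5) * X 2 + X 0 ^ 3 +
      C w * X 0 ^ 5 * X 1 + C a * X 0 ^ 8 * X 1 + C w * X 0 ^ 4 * X 1 ^ 3 +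
      X 0 * X 1 ^ 4) :
    {u : Fin 3 → k | eval u F = 0 ∧ eval u (pderiv 0 F) = 0 ∧
        eval u (pderiv 1 F) = 0 ∧ eval u (pderiv 2 F) = 0}.Finite ∧
      (0 : Fin 3 → k) ∈ {u : Fin 3 → k | eval u F = 0 ∧ eval u (pderiv 0 F) = 0 ∧
        eval u (pderiv 1 F) = 0 ∧ eval u (pderiv 2 F) = 0} := by
  have h2 : (2 : k) = 0 := by exact_mod_cast (CharP.cast_eq_zero k 2)
  have eF : ∀ u : Fin 3 → k, eval u F =
      u 2 ^ 2 + (w * u 0 ^ 4 + b * u 0 ^ 5) * u 2 + u 0 ^ 3 + w * u 0 ^ 5 * u 1 +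
        a * u 0 ^ 8 * u 1 + w * u 0 ^ 4 * u 1 ^ 3 + u 0 * u 1 ^ 4 := by
    intro u; subst hF; simp
  have e0 : ∀ u : Fin 3 → k, eval u (pderiv 0 F) =
      b * u 0 ^ 4 * u 2 + u 0 ^ 2 + w * u 0 ^ 4 * u 1 + u 1 ^ 4 := by
    intro u; subst hF
    simp [pderiv_mul, pderiv_pow, pderiv_X, Pi.single_apply]
    linear_combination (2*w*u 0^3*u 2 + 2*b*u 0^4*u 2 + 2*w*u 0^3*u 1^3 +
      2*w*u 0^4*u 1 + u 0^2 + 4*a*u 0^7*u 1) * h2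
  have e1 : ∀ u : Fin 3 → k, eval u (pderiv 1 F) =
      w * u 0 ^ 5 + a * u 0 ^ 8 + w * u 0 ^ 4 * u 1 ^ 2 := by
    intro u; subst hF
    simp [pderiv_mul, pderiv_pow, pderiv_X, Pi.single_apply]
    linear_combination (w * u 0 ^ 4 * u 1 ^ 2 + 2 * u 0 * u 1 ^ 3) * h2
  have e2 : ∀ u : Fin 3 → k, eval u (pderiv 2 F) =
      w * u 0 ^ 4 + b * u 0 ^ 5 := by
    intro u; subst hF
    simp [pderiv_mul, pderiv_pow, pderiv_X, Pi.single_apply]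
    exact Or.inl h2
  set S := {u : Fin 3 → k | eval u F = 0 ∧ eval u (pderiv 0 F) = 0 ∧
      eval u (pderiv 1 F) = 0 ∧ eval u (pderiv 2 F) = 0} with hS
  have sqinj : ∀ p q : k, p ^ 2 = q ^ 2 → p = q := by
    intro p q h
    have hpq : (p - q) ^ 2 = 0 := by linear_combination h + (q ^ 2 - p * q) * h2
    have := pow_eq_zero_iff (two_ne_zero) |>.mp hpq
    exact sub_eq_zero.mp this
  constructor
  · have hA : (S ∩ {u | u 0 = 0}).Subsingleton := by
      intro u ⟨⟨huF, hu0, hu1, hu2⟩, hux⟩ v ⟨⟨hvF, hv0, hv1, hv2⟩, hvx⟩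
      rw [eF] at huF hvF; rw [e0] at hu0 hv0
      simp only [Set.mem_setOf_eq] at hux hvx
      have hu1' : u 1 = 0 := by
        have h4 : u 1 ^ 4 = 0 := by rw [hux] at hu0; linear_combination hu0
        exact pow_eq_zero_iff (by norm_num) |>.mp h4
      have hv1' : v 1 = 0 := by
        have h4 : v 1 ^ 4 = 0 := by rw [hvx] at hv0; linear_combination hv0
        exact pow_eq_zero_iff (by norm_num) |>.mp h4
      have hu2' : u 2 = 0 := by
        have h4 : u 2 ^ 2 = 0 := by rw [hux, hu1'] at huF; linear_combination huF
        exact pow_eq_zero_iff (by norm_num) |>.mp h4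
      have hv2' : v 2 = 0 := by
        have h4 : v 2 ^ 2 = 0 := by rw [hvx, hv1'] at hvF; linear_combination hvF
        exact pow_eq_zero_iff (by norm_num) |>.mp h4
      funext i
      fin_cases i
      · show u 0 = v 0; rw [hux, hvx]
      · show u 1 = v 1; rw [hu1', hv1']
      · show u 2 = v 2; rw [hu2', hv2']
    have hB : (S ∩ {u | u 0 ≠ 0}).Subsingleton := by
      intro u ⟨⟨huF, hu0, hu1, hu2⟩, hux⟩ v ⟨⟨hvF, hv0, hv1, hv2⟩, hvx⟩
      rw [eF] at huF hvF; rw [e0] at hu0 hv0; rw [e1] at hu1 hv1; rw [e2] at hu2 hv2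
      simp only [Set.mem_setOf_eq] at hux hvx
      have hbu : w + b * u 0 = 0 := by
        have := mul_left_cancel₀ (pow_ne_zero 4 hux)
          (show u 0 ^ 4 * (w + b * u 0) = u 0 ^ 4 * 0 by linear_combination hu2)
        simpa using this
      have hbv : w + b * v 0 = 0 := by
        have := mul_left_cancel₀ (pow_ne_zero 4 hvx)
          (show v 0 ^ 4 * (w + b * v 0) = v 0 ^ 4 * 0 by linear_combination hv2)
        simpa using this
      have hb : b ≠ 0 := by
        intro h; rw [h] at hbu; simp at hbu; exact hw hbu
      have hx : u 0 = v 0 := by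
        have : b * u 0 = b * v 0 := by linear_combination hbu - hbv
        exact mul_left_cancel₀ hb this
      rw [hx] at hu0 hu1
      have htt : u 1 = v 1 := by
        apply sqinj
        have h4 : w * v 0 ^ 4 ≠ 0 := mul_ne_zero hw (pow_ne_zero _ hvx)
        exact mul_left_cancel₀ h4 (by linear_combination hu1 - hv1)
      rw [htt] at hu0
      have hz : u 2 = v 2 := by
        have h4 : b * v 0 ^ 4 ≠ 0 := mul_ne_zero hb (pow_ne_zero _ hvx)
        exact mul_left_cancel₀ h4 (by linear_combination hu0 - hv0)
      funext i; fin_cases i <;> assumption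
    have hsub : S ⊆ (S ∩ {u | u 0 = 0}) ∪ (S ∩ {u | u 0 ≠ 0}) := by
      intro u hu
      by_cases h : u 0 = 0
      · exact Or.inl ⟨hu, h⟩
      · exact Or.inr ⟨hu, h⟩
    exact Set.Finite.subset (Set.Finite.union hA.finite hB.finite) hsub
  · refine ⟨?_, ?_, ?_, ?_⟩ <;>
      simp only [Set.mem_setOf_eq, eF, e0, e1, e2, Pi.zero_apply] <;> ring
end

section
/- Let k be a field of characteristic 2 and let a ∈ k with a ≠ 0. Let F = z² + x³·s⁴ + a·x⁸·s³ + x as a polynomial in k[x,s,z]. Then there is no point (x₀,s₀,z₀) ∈ k³ at which F and all three formal partial derivatives ∂F/∂x, ∂F/∂s, ∂F/∂z vanish simultaneously. -/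
open MvPolynomial

/-- The α₂-type (Ẽ₈ + R) Enriques equation in the chart y = 1, t = 1 (variables `X 0 = x`,
`X 1 = s`, `X 2 = z`): the surface `z² + x³·s⁴ + a·x⁸·s³ + x = 0` is nonsingular throughout
this chart. -/
theorem nonsingular_alpha2_E8_chart_t
    (k : Type*) [Field k] [CharP k 2] (a : k) (ha : a ≠ 0)
    (F : MvPolynomial (Fin 3) k)
    (hF : F = X 2 ^ 2 + X 0 ^ 3 * X 1 ^ 4 + C a * X 0 ^ 8 * X 1 ^ 3 + X 0) :
    ∀ v : Fin 3 → k, ¬ (eval v F = 0 ∧ eval v (pderiv 0 F) = 0 ∧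
      eval v (pderiv 1 F) = 0 ∧ eval v (pderiv 2 F) = 0) := by
  rintro v ⟨h0, h1, h2, h3⟩
  have h2' : (2 : k) = 0 := by exact_mod_cast CharP.cast_eq_zero k 2
  simp only [hF, map_add, map_mul, map_pow, Derivation.leibniz, Derivation.leibniz_pow,
    pderiv_X, pderiv_C, smul_eq_mul, map_zero, map_one, map_ofNat, eval_X, eval_C,
    Pi.single_eq_same, Pi.single_eq_of_ne (by decide : (2:Fin 3) ≠ 0),
    Pi.single_eq_of_ne (by decide : (1:Fin 3) ≠ 0),
    Pi.single_eq_of_ne (by decide : (0:Fin 3) ≠ 1),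
    Pi.single_eq_of_ne (by decide : (2:Fin 3) ≠ 1)] at h1 h2
  -- reduce coefficients mod 2
  have h3' : (3 : k) = 1 := by
    have : (3 : k) = 2 + 1 := by norm_num
    rw [this, h2', zero_add]
  have h4' : (4 : k) = 0 := by
    have : (4 : k) = 2 * 2 := by norm_num
    rw [this, h2', zero_mul]
  have h8' : (8 : k) = 0 := by
    have : (8 : k) = 2 * 4 := by norm_num
    rw [this, h2', h4', mul_zero]
  ring_nf at h1 h2
  simp only [map_zero, map_mul, map_pow, map_ofNat, eval_X, zero_mul, add_zero, zero_add] at h1 h2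
  rw [h3'] at h1 h2
  rw [h8'] at h1
  rw [h4'] at h2
  ring_nf at h1 h2
  -- h2 should give a * v0^8 * v1^2 = 0
  have hx : v 0 = 0 ∨ v 1 = 0 := by
    rcases mul_eq_zero.mp h2 with h | h
    · rcases mul_eq_zero.mp h with h | h
      · exact Or.inr (pow_eq_zero_iff (two_ne_zero) |>.mp h)
      · exact absurd h ha
    · exact Or.inl (pow_eq_zero_iff (Nat.succ_ne_zero 7) |>.mp h)
  rcases hx with h | h <;> simp [h] at h1
end

section
/- Let k be an algebraically closed field of characteristic 2 and let a, b ∈ k. Then for every pair (x, y) ∈ k², the affine plane curve G = 0, where G = z² + b·x³·y²·s²·z + (y⁴ + x⁴)·x³·y³·s⁴ + a·x⁵·y³·s³ + x·y as a polynomial in k[s,z], has a singular point: there exists (s₀, z₀) ∈ k² at which G, ∂G/∂s and ∂G/∂z all vanish. -/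
open MvPolynomial

/-- Quasi-ellipticity of the ℤ/2-type (Ẽ₇ + R) fibration: every fiber of the genus-one
fibration, restricted to the chart t = 1 (variables `X 0 = s`, `X 1 = z`), has a singular
point. -/
theorem Z2_E7_fibration_quasielliptic
    (k : Type*) [Field k] [IsAlgClosed k] [CharP k 2] (a b : k) :
    ∀ x y : k, ∀ G : MvPolynomial (Fin 2) k,
      G = X 1 ^ 2 + C (b * x ^ 3 * y ^ 2) * X 0 ^ 2 * X 1 +
        C ((y ^ 4 + x ^ 4) * x ^ 3 * y ^ 3) * X 0 ^ 4 +
        C (a * x ^ 5 * y ^ 3) * X 0 ^ 3 + C (x * y) →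
      ∃ v : Fin 2 → k, eval v G = 0 ∧ eval v (pderiv 0 G) = 0 ∧
        eval v (pderiv 1 G) = 0 := by
  intro x y G hG
  obtain ⟨z₀, hz⟩ := IsAlgClosed.exists_pow_nat_eq (x * y) (n := 2) (by norm_num)
  refine ⟨![0, z₀], ?_, ?_, ?_⟩ <;> subst hG <;>
    simp [pderiv_X, hz, CharTwo.add_self_eq_zero, CharTwo.two_eq_zero]
end

section
/- Let k be an algebraically closed field of characteristic 2 and let w ∈ k with w ≠ 0. Then there exist elements c, λx, λy, λs, λt, λz ∈ k satisfying the six equations: c·λz² = 1, c·λx³·λy⁷·λs⁴ = 1, c·λx·λy·λt⁴ = 1, w·c·λz·λx⁴·λy·λs² = 1, w·c·λx⁵·λy³·λs³·λt = 1, and w·c·λx⁴·λs·λt³ = 1. -/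
/-- Rescaling the α₂-type (Ẽ₆ + R) equation so that the parameter `w` becomes 1. -/
theorem alpha2_E6_rescale_w_to_one
    (k : Type*) [Field k] [IsAlgClosed k] [CharP k 2] (w : k) (hw : w ≠ 0) :
    ∃ c lx ly ls lt lz : k,
      c * lz ^ 2 = 1 ∧
      c * lx ^ 3 * ly ^ 7 * ls ^ 4 = 1 ∧
      c * lx * ly * lt ^ 4 = 1 ∧
      w * c * lz * lx ^ 4 * ly * ls ^ 2 = 1 ∧
      w * c * lx ^ 5 * ly ^ 3 * ls ^ 3 * lt = 1 ∧
      w * c * lx ^ 4 * ls * lt ^ 3 = 1 := by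
  obtain ⟨u, hu⟩ := IsAlgClosed.exists_pow_nat_eq w (n := 5) (by norm_num)
  have hu0 : u ≠ 0 := by
    rintro rfl
    exact hw (by simpa using hu.symm)
  refine ⟨1, u⁻¹, u, u⁻¹, 1, 1, ?_, ?_, ?_, ?_, ?_, ?_⟩ <;>
    field_simp <;> subst hu <;> ring
end
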